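/- arXiv:1607.07862 — 12 statements merged into one kernel-verified Lean document; each statement's English description precedes it below -/
import Mathlib

section
/- Let ν be a measure on the product σ-algebra B^T of R^T (T an arbitrary index set). Then for every A in B^T, the inner measure of A minus the origin satisfies ν_*(A \ {0_T}) = sup over finite nonempty J ⊆ T of ν(A \ π_J^{-1}({0_J})), where π_J is the coordinate projection onto R^J. -/
open MeasureTheory Set
open scoped ENNReal

/-- The inner measure of a measure `ν`: `ν_*(E) = sup{ν(D) : D ⊆ E, D measurable}`. -/
noncomputable def innerMeasure {α : Type*} [MeasurableSpace α] (ν : Measure α) (E : Set α) :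
    ℝ≥0∞ :=
  ⨆ (D : Set α) (_ : MeasurableSet D) (_ : D ⊆ E), ν D

/-- Every measurable set in a product σ-algebra depends on countably many coordinates. -/
lemma measurableSet_depends_countable {T : Type*} {D : Set (T → ℝ)} (hD : MeasurableSet D) :
    ∃ S : Set T, S.Countable ∧ ∀ x y : T → ℝ, (∀ t ∈ S, x t = y t) → x ∈ D → y ∈ D := by
  let M : MeasurableSpace (T → ℝ) :=
    { MeasurableSet' := fun D =>
        ∃ S : Set T, S.Countable ∧ ∀ x y : T → ℝ, (∀ t ∈ S, x t = y t) → x ∈ D → y ∈ D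
      measurableSet_empty := ⟨∅, countable_empty, fun _ _ _ h => h.elim⟩
      measurableSet_compl := by
        rintro E ⟨S, hS, hE⟩
        exact ⟨S, hS, fun x y hxy hx hy => hx (hE y x (fun t ht => (hxy t ht).symm) hy)⟩
      measurableSet_iUnion := by
        intro f hf
        choose S hSc hS using hf
        refine ⟨⋃ n, S n, countable_iUnion hSc, ?_⟩
        rintro x y hxy hx
        rcases mem_iUnion.1 hx with ⟨n, hn⟩
        exact mem_iUnion.2 ⟨n, hS n x y (fun t ht => hxy t (mem_iUnion.2 ⟨n, ht⟩)) hn⟩ }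
  have hle : (MeasurableSpace.pi : MeasurableSpace (T → ℝ)) ≤ M := by
    refine iSup_le fun t => ?_
    rintro E ⟨B, _, rfl⟩
    exact ⟨{t}, countable_singleton t,
      fun x y hxy hx => by simpa [← hxy t rfl] using hx⟩
  exact hle D hD

/-- For every measurable `A ⊆ ℝ^T`,
`ν_*(A \ {0_T}) = sup_{J finite nonempty} ν(A \ π_J⁻¹({0_J}))`. -/
theorem inner_measure_diff_zero_eq_iSup {T : Type*} (ν : Measure (T → ℝ))
    (A : Set (T → ℝ)) (hA : MeasurableSet A) :
    innerMeasure ν (A \ {0}) =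
      ⨆ (J : Finset T) (_ : J.Nonempty), ν (A \ {x : T → ℝ | ∀ t ∈ J, x t = 0}) := by
  classical
  have hJm : ∀ J : Finset T, MeasurableSet {x : T → ℝ | ∀ t ∈ J, x t = 0} := by
    intro J
    have : {x : T → ℝ | ∀ t ∈ J, x t = 0} = ⋂ t ∈ J, (fun x : T → ℝ => x t) ⁻¹' {0} := by
      ext x; simp
    rw [this]
    exact MeasurableSet.biInter J.countable_toSet fun t _ =>
      (measurable_pi_apply t) (measurableSet_singleton 0)
  refine le_antisymm ?_ ?_
  · -- ≤ : every measurable D ⊆ A \ {0} has measure bounded by the sup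
    refine iSup_le fun D => iSup_le fun hD => iSup_le fun hDA => ?_
    obtain ⟨S, hSc, hS⟩ := measurableSet_depends_countable hD
    -- every x ∈ D differs from 0 at some coordinate in S
    have hdiff : ∀ x ∈ D, ∃ t ∈ S, x t ≠ 0 := by
      intro x hx
      by_contra h
      push_neg at h
      have h0 : (0 : T → ℝ) ∈ D := hS x 0 (fun t ht => by simp [h t ht]) hx
      exact (hDA h0).2 rfl
    rcases S.eq_empty_or_nonempty with rfl | hSne
    · have : D = ∅ := by
        ext x
        simp only [mem_empty_iff_false, iff_false]
        intro hx
        rcases hdiff x hx with ⟨t, ht, _⟩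
        exact ht
      simp [this]
    · obtain ⟨f, hf⟩ := hSc.exists_surjective hSne
      set g : ℕ → T := fun n => (f n : T) with hg
      set E : ℕ → Set (T → ℝ) :=
        fun n => A \ {x : T → ℝ | ∀ t ∈ (Finset.range (n + 1)).image g, x t = 0} with hE
      have hEm : ∀ n, MeasurableSet (E n) := fun n => hA.diff (hJm _)
      have hEmono : Monotone E := by
        intro m n hmn
        apply diff_subset_diff_right
        intro x hx t ht
        rcases Finset.mem_image.1 ht with ⟨k, hk, rfl⟩
        exact hx _ (Finset.mem_image.2 ⟨k, Finset.mem_range.2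
          (lt_of_lt_of_le (Finset.mem_range.1 hk) (by omega)), rfl⟩)
      have hDsub : D ⊆ ⋃ n, E n := by
        intro x hx
        rcases hdiff x hx with ⟨t, ht, hxt⟩
        rcases hf ⟨t, ht⟩ with ⟨n, hn⟩
        refine mem_iUnion.2 ⟨n, (hDA hx).1, ?_⟩
        intro h
        refine hxt (h t (Finset.mem_image.2 ⟨n, Finset.self_mem_range_succ n, ?_⟩))
        show (f n : T) = t
        rw [hn]
      calc ν D ≤ ν (⋃ n, E n) := measure_mono hDsub
        _ = ⨆ n, ν (E n) := (hEmono.directed_le).measure_iUnion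
        _ ≤ _ := by
            refine iSup_le fun n => ?_
            refine le_trans ?_ (le_iSup₂ (f := fun (J : Finset T) (_ : J.Nonempty) =>
              ν (A \ {x : T → ℝ | ∀ t ∈ J, x t = 0})) ((Finset.range (n + 1)).image g)
              ⟨g 0, Finset.mem_image.2 ⟨0, Finset.mem_range.2 n.succ_pos, rfl⟩⟩)
            exact le_rfl
  · -- ≥ : each candidate set is measurable and contained in A \ {0}
    refine iSup_le fun J => iSup_le fun hJ => ?_
    have hm : MeasurableSet (A \ {x : T → ℝ | ∀ t ∈ J, x t = 0}) := hA.diff (hJm J)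
    have hsub : A \ {x : T → ℝ | ∀ t ∈ J, x t = 0} ⊆ A \ {0} := by
      rintro x ⟨hxA, hx⟩
      refine ⟨hxA, fun h0 => hx ?_⟩
      rw [mem_singleton_iff] at h0
      intro t _
      simp [h0]
    exact le_iSup₂_of_le (A \ {x : T → ℝ | ∀ t ∈ J, x t = 0}) hm
      (le_iSup_of_le hsub le_rfl)
end

section
/- Let ν be a measure on (R^T, B^T). Define ν^0(A) := ν_*(A \ {0_T}) for A in B^T. Then ν^0 is a measure, ν^0 agrees with ν on all measurable sets B ∈ B^T that do not contain the zero function, and ν^0 itself satisfies ν^0(A) = (ν^0)_*(A \ {0_T}) for all A ∈ B^T. -/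
open MeasureTheory Set
open scoped ENNReal

/-!
Nothing about `ℝ^T` or the point `0` matters: `A ↦ ν_*(A ∩ S)` is a measure for every set
`S`. The key fact is that an inner measure is attained by a measurable kernel `K ⊆ E`, since the
measurable subsets of `E` are closed under countable unions; splitting kernels along a disjoint
family gives countable additivity. This measure agrees with `ν` on measurable subsets of `S`, in
particular on a kernel of `A ∩ S`, which therefore witnesses `ν^0(A) ≤ (ν^0)_*(A ∩ S)`.
-/

section InnerMeasure

variable {α : Type*} [MeasurableSpace α] (ν : Measure α)

theorem le_innerMeasure {D E : Set α} (hD : MeasurableSet D) (hDE : D ⊆ E) :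
    ν D ≤ innerMeasure ν E :=
  le_iSup_of_le D <| le_iSup_of_le hD <| le_iSup_of_le hDE le_rfl

theorem innerMeasure_le_measure (E : Set α) : innerMeasure ν E ≤ ν E :=
  iSup₂_le fun _ _ => iSup_le fun hDE => measure_mono hDE

theorem MeasurableSet.innerMeasure_eq {E : Set α} (hE : MeasurableSet E) :
    innerMeasure ν E = ν E :=
  (innerMeasure_le_measure ν E).antisymm (le_innerMeasure ν hE subset_rfl)

theorem innerMeasure_eq_sSup (E : Set α) :
    innerMeasure ν E = sSup (ν '' {D | MeasurableSet D ∧ D ⊆ E}) := by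
  simp only [innerMeasure, sSup_image, mem_ofPred_eq, iSup_and]

theorem exists_measurableSet_subset_measure_eq_innerMeasure (E : Set α) :
    ∃ K ⊆ E, MeasurableSet K ∧ ν K = innerMeasure ν E := by
  have hne : (ν '' {D | MeasurableSet D ∧ D ⊆ E}).Nonempty :=
    ⟨0, ∅, ⟨.empty, empty_subset E⟩, measure_empty⟩
  obtain ⟨u, -, hu_lim, hu_mem⟩ := exists_seq_tendsto_sSup hne (OrderTop.bddAbove _)
  choose D hD hνD using hu_mem
  have hK : MeasurableSet (⋃ n, D n) := .iUnion fun n => (hD n).1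
  have hKE : (⋃ n, D n) ⊆ E := iUnion_subset fun n => (hD n).2
  refine ⟨⋃ n, D n, hKE, hK, (le_innerMeasure ν hK hKE).antisymm ?_⟩
  rw [innerMeasure_eq_sSup]
  exact le_of_tendsto' hu_lim fun n => hνD n ▸ measure_mono (subset_iUnion D n)

theorem innerMeasure_iUnion_inter {f : ℕ → Set α} (hf : ∀ i, MeasurableSet (f i))
    (hdisj : Pairwise (Function.onFun Disjoint f)) (S : Set α) :
    innerMeasure ν ((⋃ i, f i) ∩ S) = ∑' i, innerMeasure ν (f i ∩ S) := by
  apply le_antisymm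
  · obtain ⟨K, hKS, hK, hνK⟩ := exists_measurableSet_subset_measure_eq_innerMeasure ν
      ((⋃ i, f i) ∩ S)
    have hK_eq : K = ⋃ i, K ∩ f i := by
      rw [← inter_iUnion, inter_eq_left.mpr (hKS.trans inter_subset_left)]
    calc innerMeasure ν ((⋃ i, f i) ∩ S) = ν (⋃ i, K ∩ f i) := by rw [← hK_eq, hνK]
      _ = ∑' i, ν (K ∩ f i) :=
        measure_iUnion (fun i j hij => (hdisj hij).mono inter_subset_right inter_subset_right)
          fun i => hK.inter (hf i)
      _ ≤ ∑' i, innerMeasure ν (f i ∩ S) := ENNReal.tsum_le_tsum fun i =>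
        le_innerMeasure ν (hK.inter (hf i)) fun x hx => ⟨hx.2, (hKS hx.1).2⟩
  · choose K hKS hK hνK using fun i => exists_measurableSet_subset_measure_eq_innerMeasure ν
      (f i ∩ S)
    calc ∑' i, innerMeasure ν (f i ∩ S) = ν (⋃ i, K i) := by
          rw [measure_iUnion (fun i j hij => (hdisj hij).mono ((hKS i).trans inter_subset_left)
            ((hKS j).trans inter_subset_left)) hK]
          exact tsum_congr fun i => (hνK i).symm
      _ ≤ innerMeasure ν ((⋃ i, f i) ∩ S) :=
        le_innerMeasure ν (.iUnion hK) <| iUnion_subset fun i =>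
          (hKS i).trans (inter_subset_inter_left S (subset_iUnion f i))

end InnerMeasure

namespace MeasureTheory.Measure

variable {α : Type*} [MeasurableSpace α]

noncomputable def innerRestrict (ν : Measure α) (S : Set α) : Measure α :=
  ofMeasurable (fun A _ => innerMeasure ν (A ∩ S))
    (by rw [empty_inter, ← nonpos_iff_eq_zero, ← measure_empty (μ := ν)]
        exact innerMeasure_le_measure ν ∅)
    fun _ hf hdisj => innerMeasure_iUnion_inter ν hf hdisj S

variable (ν : Measure α) (S : Set α)

theorem innerRestrict_apply {A : Set α} (hA : MeasurableSet A) :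
    ν.innerRestrict S A = innerMeasure ν (A ∩ S) :=
  ofMeasurable_apply A hA

theorem innerRestrict_apply_of_subset {B : Set α} (hB : MeasurableSet B) (hBS : B ⊆ S) :
    ν.innerRestrict S B = ν B := by
  rw [innerRestrict_apply ν S hB, inter_eq_left.mpr hBS, hB.innerMeasure_eq]

theorem innerRestrict_apply_eq_innerMeasure_inter {A : Set α} (hA : MeasurableSet A) :
    ν.innerRestrict S A = innerMeasure (ν.innerRestrict S) (A ∩ S) := by
  refine le_antisymm ?_ (innerMeasure_le_measure _ _ |>.trans (measure_mono inter_subset_left))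
  obtain ⟨K, hKS, hK, hνK⟩ := exists_measurableSet_subset_measure_eq_innerMeasure ν (A ∩ S)
  calc ν.innerRestrict S A = ν.innerRestrict S K := by
        rw [innerRestrict_apply ν S hA, ← hνK,
          innerRestrict_apply_of_subset ν S hK (hKS.trans inter_subset_right)]
    _ ≤ innerMeasure (ν.innerRestrict S) (A ∩ S) := le_innerMeasure _ hK hKS

end MeasureTheory.Measure

/-- `ν^0(A) := ν_*(A \ {0_T})` is a measure, it agrees with `ν` on measurable sets not
containing the zero function, and `ν^0` itself satisfies condition (L2):
`ν^0(A) = (ν^0)_*(A \ {0_T})` for all measurable `A`. -/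
theorem exists_measure_eq_innerMeasure_diff_zero {T : Type*} (ν : Measure (T → ℝ)) :
    ∃ ν0 : Measure (T → ℝ),
      (∀ A : Set (T → ℝ), MeasurableSet A → ν0 A = innerMeasure ν (A \ {0})) ∧
      (∀ B : Set (T → ℝ), MeasurableSet B → (0 : T → ℝ) ∉ B → ν0 B = ν B) ∧
      (∀ A : Set (T → ℝ), MeasurableSet A → ν0 A = innerMeasure ν0 (A \ {0})) := by
  refine ⟨ν.innerRestrict {0}ᶜ, fun A hA => ?_, fun B hB h0B => ?_, fun A hA => ?_⟩
  · exact ν.innerRestrict_apply {0}ᶜ hA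
  · exact ν.innerRestrict_apply_of_subset {0}ᶜ hB (subset_compl_singleton_iff.mpr h0B)
  · exact ν.innerRestrict_apply_eq_innerMeasure_inter {0}ᶜ hA
end

section
/- Let ν be a measure on (R^T, B^T) satisfying ν(A) = ν_*(A \ {0_T}) for all A ∈ B^T. Then for every countable nonempty T_0 ⊆ T with ν{x : x restricted to T_0 equals 0} > 0, there exists t ∉ T_0 such that ν{x : x restricted to T_0 equals 0 and x(t) ≠ 0} > 0. -/
open MeasureTheory Set
open scoped ENNReal

/-! By the hypothesis on `ν`, the set `{x | x_{T₀} = 0} \ {0}` contains a measurable set `D` of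
positive measure. Being measurable, `D` depends only on a countable set `I` of coordinates, so
`0 ∉ D` forces every point of `D` to be nonzero at some coordinate of `I`, necessarily outside
`T₀`. Thus `D` is covered by the countably many sets `{x | x_{T₀} = 0, x t ≠ 0}`, `t ∈ I \ T₀`,
one of which must have positive measure. -/

theorem exists_lt_measure_of_lt_innerMeasure {α : Type*} [MeasurableSpace α] {ν : Measure α}
    {E : Set α} {r : ℝ≥0∞} (h : r < innerMeasure ν E) :
    ∃ D, MeasurableSet D ∧ D ⊆ E ∧ r < ν D := by
  simpa only [innerMeasure, lt_iSup_iff, exists_prop] using h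

theorem preimage_domRestrict_subset_biUnion_ne_zero {ι : Type*} {α : ι → Type*}
    [∀ i, Zero (α i)] {I : Set ι} {s : Set ((i : I) → α i)}
    (h0 : (0 : (i : ι) → α i) ∉ I.domRestrict ⁻¹' s) :
    I.domRestrict ⁻¹' s ⊆ ⋃ i ∈ I, {x | x i ≠ 0} := by
  intro x hx
  by_contra hx0
  have : I.domRestrict x = I.domRestrict 0 := funext fun i => by
    by_contra hi
    exact hx0 (mem_biUnion i.2 hi)
  exact h0 (by rwa [mem_preimage, ← this])

/-- If `ν` satisfies (L2), then for every countable nonempty `T₀ ⊆ T` with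
`ν{x : x_{T₀} = 0} > 0` there exists `t ∉ T₀` with
`ν{x : x_{T₀} = 0, x(t) ≠ 0} > 0`. -/
theorem exists_coord_ne_zero_of_levy_L2 {T : Type*} (ν : Measure (T → ℝ))
    (hL2 : ∀ A : Set (T → ℝ), MeasurableSet A → ν A = innerMeasure ν (A \ {0})) :
    ∀ T0 : Set T, T0.Countable → T0.Nonempty →
      0 < ν {x : T → ℝ | ∀ t ∈ T0, x t = 0} →
      ∃ t ∉ T0, 0 < ν {x : T → ℝ | (∀ s ∈ T0, x s = 0) ∧ x t ≠ 0} := by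
  intro T0 hT0 _ hpos
  set A := {x : T → ℝ | ∀ t ∈ T0, x t = 0}
  have hA : MeasurableSet A := by
    simp only [A, ofPred_forall]
    exact .biInter hT0 fun t _ => measurableSet_eq_fun (measurable_pi_apply t) measurable_const
  rw [hL2 A hA] at hpos
  obtain ⟨D, hD, hDA, hDpos⟩ := exists_lt_measure_of_lt_innerMeasure hpos
  obtain ⟨I, S, hI, rfl⟩ := hD.eq_preimage_restrict_countable
  have hcover : I.domRestrict ⁻¹' S ⊆
      ⋃ t ∈ I \ T0, {x : T → ℝ | (∀ s ∈ T0, x s = 0) ∧ x t ≠ 0} := by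
    intro x hx
    obtain ⟨t, ht, hxt⟩ := mem_iUnion₂.1 <|
      preimage_domRestrict_subset_biUnion_ne_zero (fun h0 => (hDA h0).2 rfl) hx
    exact mem_biUnion ⟨ht, fun htT0 => hxt ((hDA hx).1 t htT0)⟩ ⟨(hDA hx).1, hxt⟩
  by_contra! hnull
  refine hDpos.ne' (measure_mono_null hcover ?_)
  exact (measure_biUnion_null_iff (hI.mono sdiff_subset)).2 fun t ht =>
    nonpos_iff_eq_zero.1 (hnull t ht.2)
end

section
/- Let Y = (Y_t)_{t∈[0,1]} be a standard Poisson process on [0,1]. Then there is no nonzero deterministic function ψ : [0,1] → R for which there exists a nonnegative random variable η with E[η] = 1 such that E[F((Y_t + ψ(t))_{t∈[0,1]})] = E[F((Y_t)_{t∈[0,1]}) η] for all bounded measurable functionals F : R^{[0,1]} → R. -/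
open MeasureTheory ProbabilityTheory Set Filter Topology
open scoped ENNReal

/-!
If `E[F(Y + ψ)] = E[F(Y) η]` for all bounded measurable `F`, then the law of `Y + ψ` is absolutely
continuous with respect to that of `Y`. Since `Y` is almost surely `ℕ`-valued with `Y 0 = 0` and
`Y t = 0` has positive probability, this forces `ψ 0 = 0` and `ψ t ∈ ℕ` on `[0,1]`, so a nonzero `ψ`
has increments `ψ tₙ - ψ sₙ ≥ 1` on intervals of length `tₙ - sₙ → 0`. Almost surely `Y` has an
increment `< 1` on one of them, because `P(Y t - Y s ≥ 1) ≤ 1 - e^{-(t - s)} ≤ t - s`, while all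
increments of `Y + ψ` on them are `≥ 1`.
-/

lemma ae_mem_of_forall_integral_comp_eq_integral_comp_mul {Ω E : Type*} [MeasurableSpace Ω]
    [MeasurableSpace E] {μ : Measure Ω} [IsFiniteMeasure μ] {X X' : Ω → E} {η : Ω → ℝ}
    (hX' : Measurable X')
    (h : ∀ F : E → ℝ, Measurable F → (∃ C, ∀ x, |F x| ≤ C) →
      ∫ ω, F (X' ω) ∂μ = ∫ ω, F (X ω) * η ω ∂μ)
    {S : Set E} (hS : MeasurableSet S) (hXS : ∀ᵐ ω ∂μ, X ω ∈ S) : ∀ᵐ ω ∂μ, X' ω ∈ S := by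
  have hF := h (Sᶜ.indicator 1) (measurable_one.indicator hS.compl)
    ⟨1, fun x => by by_cases hx : x ∈ Sᶜ <;> simp [hx]⟩
  have hrhs : ∫ ω, Sᶜ.indicator 1 (X ω) * η ω ∂μ = 0 :=
    integral_eq_zero_of_ae (by filter_upwards [hXS] with ω hω; simp [hω])
  have hlhs : ∫ ω, Sᶜ.indicator 1 (X' ω) ∂μ = μ.real (X' ⁻¹' Sᶜ) := by
    rw [← integral_indicator_one (hX' hS.compl)]
    rfl
  rw [hrhs, hlhs, measureReal_eq_zero_iff] at hF
  exact ae_iff.2 hF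

lemma mem_of_ae_add_mem {Ω M : Type*} [MeasurableSpace Ω] [AddZeroClass M] {μ : Measure Ω}
    {X : Ω → M} {c : M} {S : Set M} (hX : μ {ω | X ω = 0} ≠ 0)
    (h : ∀ᵐ ω ∂μ, X ω + c ∈ S) : c ∈ S := by
  by_contra hc
  exact hX (measure_mono_null (fun ω (hω : X ω = 0) => by simpa [hω]) (ae_iff.1 h))

lemma exists_step_eq_div_one_le_sub {ψ : ℝ → ℝ} {a b : ℝ} (hab : a ≤ b)
    (hψ : ∀ u ∈ Icc a b, ψ u ∈ range ((↑) : ℕ → ℝ)) (ha : ψ a = 0) (hb : ψ b ≠ 0) (n : ℕ) :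
    ∃ s t, s ∈ Icc a b ∧ t ∈ Icc a b ∧ s ≤ t ∧ t - s = (b - a) / (n + 1) ∧
      1 ≤ ψ t - ψ s := by
  classical
  set d := (b - a) / (n + 1) with hd
  have hd0 : 0 ≤ d := div_nonneg (sub_nonneg.2 hab) (by positivity)
  set x : ℕ → ℝ := fun k => a + k * d with hx
  have hx_last : x (n + 1) = b := by
    simp only [hx, hd]; push_cast; field_simp; ring
  have hmem : ∀ k ≤ n + 1, x k ∈ Icc a b := fun k hk => by
    refine ⟨le_add_of_nonneg_right (by positivity), hx_last ▸ ?_⟩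
    have hk' : (k : ℝ) ≤ (n + 1 : ℕ) := by exact_mod_cast hk
    exact add_le_add_right (mul_le_mul_of_nonneg_right hk' hd0) a
  have hex : ∃ k, ψ (x k) ≠ 0 := ⟨n + 1, hx_last ▸ hb⟩
  have hk_le : Nat.find hex ≤ n + 1 := Nat.find_min' hex (hx_last ▸ hb)
  obtain ⟨j, hj⟩ : ∃ j, Nat.find hex = j + 1 :=
    Nat.exists_eq_succ_of_ne_zero fun h0 => Nat.find_spec hex (by simpa [h0, hx] using ha)
  have hψj : ψ (x j) = 0 := not_not.1 (Nat.find_min hex (by omega))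
  have hψj' : 1 ≤ ψ (x (j + 1)) := by
    obtain ⟨m, hm⟩ := hψ (x (j + 1)) (hmem (j + 1) (by omega))
    have hne : ψ (x (j + 1)) ≠ 0 := hj ▸ Nat.find_spec hex
    rw [← hm] at hne ⊢
    exact Nat.one_le_cast.2 (Nat.one_le_iff_ne_zero.2 (by exact_mod_cast hne))
  refine ⟨x j, x (j + 1), hmem j (by omega), hmem _ (by omega), ?_, ?_, by linarith⟩
  · simp only [hx]; push_cast; linarith
  · simp only [hx]; push_cast; ring

lemma exists_seq_tendsto_sub_zero_one_le_sub {ψ : ℝ → ℝ} {a b : ℝ} (hab : a ≤ b)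
    (hψ : ∀ u ∈ Icc a b, ψ u ∈ range ((↑) : ℕ → ℝ)) (ha : ψ a = 0) (hb : ψ b ≠ 0) :
    ∃ s t : ℕ → ℝ, (∀ n, s n ∈ Icc a b) ∧ (∀ n, t n ∈ Icc a b) ∧ (∀ n, s n ≤ t n) ∧
      (∀ n, 1 ≤ ψ (t n) - ψ (s n)) ∧ Tendsto (t - s) atTop (𝓝 0) := by
  choose s t hs ht hst hwidth hjump using exists_step_eq_div_one_le_sub hab hψ ha hb
  refine ⟨s, t, hs, ht, hst, hjump, ?_⟩
  rw [show t - s = fun n : ℕ => (b - a) / (n + 1) from funext hwidth]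
  simpa [Function.comp_def] using
    (tendsto_const_div_atTop_nhds_zero_nat (b - a)).comp (tendsto_add_atTop_nat 1)

section PoissonIncrements

variable {Ω : Type*} [MeasurableSpace Ω] {P : Measure Ω} {Y : Ω → ℝ → ℝ}

def HasPoissonIncrements (P : Measure Ω) (Y : Ω → ℝ → ℝ) : Prop :=
  ∀ s t : ℝ, 0 ≤ s → s ≤ t → t ≤ 1 → ∀ k : ℕ,
    P {ω | Y ω t - Y ω s = (k : ℝ)} =
      ENNReal.ofReal (Real.exp (-(t - s)) * (t - s) ^ k / (Nat.factorial k))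

namespace HasPoissonIncrements

variable {s t : ℝ}

lemma measure_setOf_increment_eq_zero (hY : HasPoissonIncrements P Y) (hs : 0 ≤ s) (hst : s ≤ t)
    (ht : t ≤ 1) :
    P {ω | Y ω t - Y ω s = 0} = ENNReal.ofReal (Real.exp (-(t - s))) := by
  simpa using hY s t hs hst ht 0

lemma measure_setOf_eq_zero_ne_zero (hY : HasPoissonIncrements P Y) (hY0 : ∀ᵐ ω ∂P, Y ω 0 = 0)
    (ht0 : 0 ≤ t) (ht1 : t ≤ 1) : P {ω | Y ω t = 0} ≠ 0 := by
  have hae : {ω | Y ω t = 0} =ᵐ[P] {ω | Y ω t - Y ω 0 = 0} := by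
    filter_upwards [hY0] with ω h
    change (Y ω t = 0) = (Y ω t - Y ω 0 = 0)
    simp [h]
  rw [measure_congr hae, hY.measure_setOf_increment_eq_zero le_rfl ht0 ht1]
  simpa using Real.exp_pos _

variable [IsProbabilityMeasure P]

lemma ae_increment_mem_range_natCast (hY : HasPoissonIncrements P Y)
    (hYm : ∀ t, Measurable fun ω => Y ω t) (hs : 0 ≤ s) (hst : s ≤ t) (ht : t ≤ 1) :
    ∀ᵐ ω ∂P, Y ω t - Y ω s ∈ range ((↑) : ℕ → ℝ) := by
  have hm : ∀ k : ℕ, MeasurableSet {ω | Y ω t - Y ω s = k} := fun k =>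
    ((hYm t).sub (hYm s)) (measurableSet_singleton _)
  have hdisj : Pairwise (Function.onFun Disjoint fun k : ℕ => {ω | Y ω t - Y ω s = k}) := by
    intro i j hij
    exact disjoint_left.2 fun ω (hi : _ = _) (hj : _ = _) =>
      hij (Nat.cast_injective (hi.symm.trans hj))
  have hsum : HasSum (fun k : ℕ => Real.exp (-(t - s)) * (t - s) ^ k / k.factorial) 1 :=
    hasSum_one_poissonMeasure ⟨t - s, sub_nonneg.2 hst⟩
  have hunion : P (⋃ k : ℕ, {ω | Y ω t - Y ω s = k}) = 1 := by
    rw [measure_iUnion hdisj hm]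
    simp_rw [hY s t hs hst ht]
    rw [← ENNReal.ofReal_tsum_of_nonneg (fun k => by have := sub_nonneg.2 hst; positivity)
      hsum.summable, hsum.tsum_eq, ENNReal.ofReal_one]
  have hset :
      {ω | Y ω t - Y ω s ∈ range ((↑) : ℕ → ℝ)} = ⋃ k : ℕ, {ω | Y ω t - Y ω s = k} := by
    ext ω
    simp [eq_comm]
  rw [Filter.Eventually, hset, mem_ae_iff, prob_compl_eq_zero_iff (.iUnion hm)]
  exact hunion

lemma ae_mem_range_natCast (hY : HasPoissonIncrements P Y)
    (hYm : ∀ t, Measurable fun ω => Y ω t) (hY0 : ∀ᵐ ω ∂P, Y ω 0 = 0) (ht0 : 0 ≤ t)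
    (ht1 : t ≤ 1) :
    ∀ᵐ ω ∂P, Y ω t ∈ range ((↑) : ℕ → ℝ) := by
  filter_upwards [hY.ae_increment_mem_range_natCast hYm le_rfl ht0 ht1, hY0] with ω h h0
  simpa [h0] using h

lemma measure_setOf_one_le_increment_le (hY : HasPoissonIncrements P Y)
    (hYm : ∀ t, Measurable fun ω => Y ω t) (hs : 0 ≤ s) (hst : s ≤ t) (ht : t ≤ 1) :
    P {ω | 1 ≤ Y ω t - Y ω s} ≤ ENNReal.ofReal (t - s) :=
  calc P {ω | 1 ≤ Y ω t - Y ω s}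
      ≤ P {ω | Y ω t - Y ω s = 0}ᶜ :=
        measure_mono fun ω (h : 1 ≤ Y ω t - Y ω s) (h0 : Y ω t - Y ω s = 0) => by linarith
    _ = 1 - ENNReal.ofReal (Real.exp (-(t - s))) := by
        rw [prob_compl_eq_one_sub (s := {ω | Y ω t - Y ω s = 0})
            (measurableSet_eq_fun (hYm t |>.sub (hYm s)) measurable_const),
          hY.measure_setOf_increment_eq_zero hs hst ht]
    _ ≤ ENNReal.ofReal (t - s) := by
        rw [tsub_le_iff_right, ← ENNReal.ofReal_add (by linarith) (Real.exp_pos _).le,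
          ← ENNReal.ofReal_one]
        exact ENNReal.ofReal_le_ofReal (by linarith [Real.add_one_le_exp (-(t - s))])

lemma ae_exists_increment_lt_one (hY : HasPoissonIncrements P Y)
    (hYm : ∀ t, Measurable fun ω => Y ω t) {s t : ℕ → ℝ} (hs : ∀ n, 0 ≤ s n)
    (hst : ∀ n, s n ≤ t n) (ht : ∀ n, t n ≤ 1) (hlim : Tendsto (t - s) atTop (𝓝 0)) :
    ∀ᵐ ω ∂P, ∃ n, Y ω (t n) - Y ω (s n) < 1 := by
  refine ae_iff.2 (le_antisymm ?_ bot_le)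
  refine ge_of_tendsto' (ENNReal.ofReal_zero ▸ ENNReal.tendsto_ofReal hlim) fun n => ?_
  refine (measure_mono fun ω (hω : ¬ ∃ n, _) => ?_).trans
    (hY.measure_setOf_one_le_increment_le hYm (hs n) (hst n) (ht n))
  exact not_lt.1 fun h => hω ⟨n, h⟩

lemma exists_measurableSet_ae_mem_and_ae_add_not_mem (hY : HasPoissonIncrements P Y)
    (hYm : ∀ t, Measurable fun ω => Y ω t) {ψ : ℝ → ℝ}
    (hψ : ∀ u ∈ Icc (0 : ℝ) 1, ψ u ∈ range ((↑) : ℕ → ℝ)) (hψ0 : ψ 0 = 0) {b : ℝ}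
    (hb : b ∈ Icc (0 : ℝ) 1) (hψb : ψ b ≠ 0) :
    ∃ T : Set (Icc (0 : ℝ) 1 → ℝ), MeasurableSet T ∧
      (∀ᵐ ω ∂P, (fun u : Icc (0 : ℝ) 1 => Y ω u) ∈ T) ∧
      ∀ᵐ ω ∂P, (fun u : Icc (0 : ℝ) 1 => Y ω u + ψ u) ∉ T := by
  obtain ⟨s, t, hs, ht, hst, hjump, hlim⟩ := exists_seq_tendsto_sub_zero_one_le_sub hb.1
    (fun u hu => hψ u (Icc_subset_Icc_right hb.2 hu)) hψ0 hψb
  have hs1 : ∀ n, s n ∈ Icc (0 : ℝ) 1 := fun n => Icc_subset_Icc_right hb.2 (hs n)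
  have ht1 : ∀ n, t n ∈ Icc (0 : ℝ) 1 := fun n => Icc_subset_Icc_right hb.2 (ht n)
  refine ⟨{x | ∃ n, x ⟨t n, ht1 n⟩ - x ⟨s n, hs1 n⟩ < 1}, ?_, ?_, ?_⟩
  · simp only [ofPred_exists]
    exact .iUnion fun n => measurableSet_lt (by fun_prop) measurable_const
  · exact hY.ae_exists_increment_lt_one hYm (fun n => (hs1 n).1) hst (fun n => (ht1 n).2) hlim
  · filter_upwards [ae_all_iff.2 fun n => hY.ae_increment_mem_range_natCast hYm
      (hs1 n).1 (hst n) (ht1 n).2] with ω hω ⟨n, hn⟩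
    obtain ⟨k, hk⟩ := hω n
    change Y ω (t n) + ψ (t n) - (Y ω (s n) + ψ (s n)) < 1 at hn
    linarith [hjump n, k.cast_nonneg (α := ℝ)]

end HasPoissonIncrements

end PoissonIncrements

theorem no_deterministic_translation_of_poisson_process_general
    {Ω : Type*} [MeasurableSpace Ω] (P : Measure Ω) [IsProbabilityMeasure P]
    (Y : Ω → ℝ → ℝ)
    (hYmeas : ∀ t : ℝ, Measurable fun ω => Y ω t)
    (hY0 : ∀ᵐ ω ∂P, Y ω 0 = 0)
    (hpois : ∀ s t : ℝ, 0 ≤ s → s ≤ t → t ≤ 1 → ∀ k : ℕ,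
      P {ω | Y ω t - Y ω s = (k : ℝ)} =
        ENNReal.ofReal (Real.exp (-(t - s)) * (t - s) ^ k / (Nat.factorial k))) :
    ¬ ∃ (ψ : ℝ → ℝ) (η : Ω → ℝ),
        (∃ t ∈ Set.Icc (0 : ℝ) 1, ψ t ≠ 0) ∧
        (∀ ω, 0 ≤ η ω) ∧ (∫ ω, η ω ∂P = 1) ∧
        ∀ F : (Set.Icc (0 : ℝ) 1 → ℝ) → ℝ, Measurable F → (∃ C, ∀ x, |F x| ≤ C) →
          ∫ ω, F (fun t => Y ω ↑t + ψ ↑t) ∂P =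
            ∫ ω, F (fun t => Y ω ↑t) * η ω ∂P := by
  rintro ⟨ψ, η, ⟨b, hb, hψb⟩, -, -, hid⟩
  have hY : HasPoissonIncrements P Y := hpois
  have transfer : ∀ S : Set (Icc (0 : ℝ) 1 → ℝ), MeasurableSet S →
      (∀ᵐ ω ∂P, (fun u : Icc (0 : ℝ) 1 => Y ω u) ∈ S) →
        ∀ᵐ ω ∂P, (fun u : Icc (0 : ℝ) 1 => Y ω u + ψ u) ∈ S := fun _ =>
    ae_mem_of_forall_integral_comp_eq_integral_comp_mul
      (measurable_pi_lambda _ fun u : Icc (0 : ℝ) 1 => (hYmeas u).add_const _) hid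
  have transfer_coord : ∀ u (hu : u ∈ Icc (0 : ℝ) 1) (S : Set ℝ), MeasurableSet S →
      (∀ᵐ ω ∂P, Y ω u ∈ S) → ∀ᵐ ω ∂P, Y ω u + ψ u ∈ S := fun u hu S hS =>
    transfer ((fun x => x ⟨u, hu⟩) ⁻¹' S) (measurable_pi_apply _ hS)
  have hψ_nat : ∀ u ∈ Icc (0 : ℝ) 1, ψ u ∈ range ((↑) : ℕ → ℝ) := fun u hu =>
    mem_of_ae_add_mem (hY.measure_setOf_eq_zero_ne_zero hY0 hu.1 hu.2)
      (transfer_coord u hu _ (countable_range _).measurableSet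
        (hY.ae_mem_range_natCast hYmeas hY0 hu.1 hu.2))
  have hψ0 : ψ 0 = 0 := mem_singleton_iff.1 <|
    mem_of_ae_add_mem (hY.measure_setOf_eq_zero_ne_zero hY0 le_rfl zero_le_one)
      (transfer_coord 0 (left_mem_Icc.2 zero_le_one) _ (measurableSet_singleton 0) hY0)
  obtain ⟨T, hT, hYT, hYψT⟩ := hY.exists_measurableSet_ae_mem_and_ae_add_not_mem hYmeas
    hψ_nat hψ0 hb hψb
  obtain ⟨ω, hω, hω'⟩ := ((transfer T hT hYT).and hYψT).exists
  exact hω' hω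

/-- For a rate-1 Poisson process `Y` on `[0,1]` there is no nonzero deterministic
function `ψ : [0,1] → ℝ` and nonnegative random variable `η` with `E[η] = 1` such that
`E[F(Y + ψ)] = E[F(Y) η]` for all bounded measurable functionals `F`. -/
theorem no_deterministic_translation_of_poisson_process
    {Ω : Type*} [MeasurableSpace Ω] (P : Measure Ω) [IsProbabilityMeasure P]
    (Y : Ω → ℝ → ℝ)
    (hYmeas : ∀ t : ℝ, Measurable fun ω => Y ω t)
    (hY0 : ∀ᵐ ω ∂P, Y ω 0 = 0)
    (hindep : ∀ (n : ℕ) (t : Fin (n + 1) → ℝ), Monotone t →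
      (∀ i, t i ∈ Set.Icc (0 : ℝ) 1) →
      iIndepFun
        (fun (i : Fin n) (ω : Ω) => Y ω (t i.succ) - Y ω (t i.castSucc)) P)
    (hpois : ∀ s t : ℝ, 0 ≤ s → s ≤ t → t ≤ 1 → ∀ k : ℕ,
      P {ω | Y ω t - Y ω s = (k : ℝ)} =
        ENNReal.ofReal (Real.exp (-(t - s)) * (t - s) ^ k / (Nat.factorial k))) :
    ¬ ∃ (ψ : ℝ → ℝ) (η : Ω → ℝ),
        (∃ t ∈ Set.Icc (0 : ℝ) 1, ψ t ≠ 0) ∧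
        (∀ ω, 0 ≤ η ω) ∧ (∫ ω, η ω ∂P = 1) ∧
        ∀ F : (Set.Icc (0 : ℝ) 1 → ℝ) → ℝ, Measurable F → (∃ C, ∀ x, |F x| ≤ C) →
          ∫ ω, F (fun t => Y ω ↑t + ψ ↑t) ∂P =
            ∫ ω, F (fun t => Y ω ↑t) * η ω ∂P :=
  no_deterministic_translation_of_poisson_process_general P Y hYmeas hY0 hpois
end

section
/- Let N be a Poisson random measure on a measurable space (S, S) with intensity measure n, and let f : S → R be a simple measurable function with ∫ (|f|^2 ∧ 1) dn < ∞. Define I_N(f) = ∫ f(s) [N(ds) − 1{|f(s)| ≤ 1} n(ds)]. Then E(|I_N(f)| ∧ 1) ≤ 2 (∫ (|f|^2 ∧ 1) dn)^{1/2}. -/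
/-! Split `f` into its small jumps (`|aⱼ| ≤ 1`) and its large jumps. Off the event `B` that `N`
charges some large-jump set, `I_N(f)` is the compensated small-jump sum `Z`, whose first absolute
moment is at most `√(Var Z) = √(Σ_small aⱼ² n(Aⱼ))` because the counts are independent with
Poisson variance `n(Aⱼ)`. Since `P(N(A) ≠ 0) = 1 - e^{-n(A)} ≤ n(A)`, `P(B) ≤ Σ_large n(Aⱼ)`.
Hence `E(|I_N(f)| ∧ 1) ≤ min(√x + y, 1)` with `x + y = ∫ (|f|² ∧ 1) dn`, and
`min(√x + y, 1) ≤ 2 √(x + y)`. -/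

open MeasureTheory ProbabilityTheory Set
open scoped ENNReal

/-- `N` is a Poisson random measure on `(S, 𝒮)` with intensity `n`, under `P`:
the counts `N(·)(A)` are measurable, `N(A)` is Poisson distributed with mean `n(A)`
whenever `n(A) < ∞`, and counts of pairwise disjoint sets are independent. -/
def IsPoissonRandomMeasure {Ω S : Type*} [MeasurableSpace Ω] [MeasurableSpace S]
    (P : Measure Ω) (N : Ω → Set S → ℝ≥0∞) (n : Measure S) : Prop :=
  (∀ A : Set S, MeasurableSet A → Measurable fun ω => N ω A) ∧
  (∀ A : Set S, MeasurableSet A → n A < ⊤ → ∀ k : ℕ,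
    P {ω | N ω A = (k : ℝ≥0∞)} =
      ENNReal.ofReal (Real.exp (-(n A).toReal) * (n A).toReal ^ k / (Nat.factorial k))) ∧
  (∀ (m : ℕ) (A : Fin m → Set S), (∀ i, MeasurableSet (A i)) →
    (Pairwise fun i j => Disjoint (A i) (A j)) →
    iIndepFun (fun i ω => N ω (A i)) P)

open scoped NNReal Nat

lemma min_sqrt_add_one_le_two_mul_sqrt {x y : ℝ} (hx : 0 ≤ x) (hy : 0 ≤ y) :
    min (√x + y) 1 ≤ 2 * √(x + y) := by
  rcases le_or_gt (x + y) 1 with h | h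
  · have hx' : √x ≤ √(x + y) := Real.sqrt_le_sqrt (by linarith)
    have hy' : y ≤ √(x + y) := (Real.le_sqrt hy (by positivity)).2 (by nlinarith)
    exact (min_le_left _ _).trans (by linarith)
  · have : 1 ≤ √(x + y) := Real.one_le_sqrt.2 h.le
    exact (min_le_right _ _).trans (by linarith)

lemma Finset.sum_mul_sub_sum_ite_eq_sum_filter {ι : Type*} [Fintype ι] (p : ι → Prop)
    [DecidablePred p] {a m r : ι → ℝ} (hm : ∀ i, ¬p i → m i = 0) :
    ∑ i, a i * m i - ∑ i, (if p i then a i * r i else 0) =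
      ∑ i ∈ univ.filter p, a i * (m i - r i) := by
  rw [← Finset.sum_filter_add_sum_filter_not univ p (fun i ↦ a i * m i),
    Finset.sum_eq_zero (s := univ.filter (¬p ·)) fun i hi ↦ by
      rw [hm i (Finset.mem_filter.1 hi).2, mul_zero],
    add_zero, ← Finset.sum_filter, ← Finset.sum_sub_distrib]
  simp only [mul_sub]

lemma Finset.sum_min_sq_one_mul_eq {ι : Type*} [Fintype ι] (a r : ι → ℝ) :
    ∑ i, min (a i ^ 2) 1 * r i =
      ∑ i ∈ univ.filter (|a ·| ≤ 1), a i ^ 2 * r i + ∑ i ∈ univ.filter (¬|a ·| ≤ 1), r i := by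
  rw [← Finset.sum_filter_add_sum_filter_not univ (|a ·| ≤ 1)]
  congr 1 <;> refine Finset.sum_congr rfl fun i hi ↦ ?_ <;>
    have hi := (Finset.mem_filter.1 hi).2
  · rw [min_eq_left ((sq_le_one_iff_abs_le_one _).2 hi)]
  · rw [min_eq_right ((one_lt_sq_iff_one_lt_abs _).2 (not_le.1 hi)).le, one_mul]

namespace ProbabilityTheory

open Real in
lemma hasSum_mul_descFactorial_poissonMeasure (r : ℝ≥0) (k : ℕ) :
    HasSum (fun n : ℕ ↦ exp (-r) * r ^ n / n ! * n.descFactorial k) ((r : ℝ) ^ k) := by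
  rw [← hasSum_nat_add_iff' k]
  have hlow : ∑ n ∈ Finset.range k, exp (-r) * r ^ n / n ! * (n.descFactorial k : ℝ) = 0 :=
    Finset.sum_eq_zero fun n hn ↦ by
      simp [Nat.descFactorial_eq_zero_iff_lt.mpr (Finset.mem_range.mp hn)]
  rw [hlow, sub_zero, ← mul_one ((r : ℝ) ^ k)]
  refine ((hasSum_one_poissonMeasure r).mul_left ((r : ℝ) ^ k)).congr_fun fun n ↦ ?_
  have h := Nat.factorial_mul_descFactorial (Nat.le_add_left k n)
  rw [Nat.add_sub_cancel] at h
  rw [← h]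
  push_cast
  field_simp
  ring

open Real in
lemma hasSum_mul_poissonMeasure (r : ℝ≥0) :
    HasSum (fun n : ℕ ↦ exp (-r) * r ^ n / n ! * n) r := by
  simpa using hasSum_mul_descFactorial_poissonMeasure r 1

open Real in
lemma hasSum_mul_sq_poissonMeasure (r : ℝ≥0) :
    HasSum (fun n : ℕ ↦ exp (-r) * r ^ n / n ! * (n : ℝ) ^ 2) (r ^ 2 + r) := by
  refine ((hasSum_mul_descFactorial_poissonMeasure r 2).add
    (hasSum_mul_poissonMeasure r)).congr_fun fun n ↦ ?_
  rw [Nat.cast_descFactorial_two]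
  ring

lemma integral_id_map_cast_poissonMeasure (r : ℝ≥0) : ∫ x, x ∂Po(ℝ, r) = r := by
  rw [integral_map .of_discrete (by fun_prop), integral_poissonMeasure]
  simpa [mul_comm] using (hasSum_mul_poissonMeasure r).tsum_eq

lemma memLp_id_map_cast_poissonMeasure (r : ℝ≥0) : MemLp id 2 Po(ℝ, r) := by
  refine (memLp_two_iff_integrable_sq aestronglyMeasurable_id).2 ?_
  rw [integrable_map_measure (by fun_prop) .of_discrete, integrable_poissonMeasure_iff]
  simpa using (hasSum_mul_sq_poissonMeasure r).summable

lemma variance_id_map_cast_poissonMeasure (r : ℝ≥0) : Var[id; Po(ℝ, r)] = r := by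
  rw [variance_eq_sub (memLp_id_map_cast_poissonMeasure r)]
  simp only [id, Pi.pow_apply]
  rw [integral_id_map_cast_poissonMeasure, integral_map .of_discrete (by fun_prop),
    integral_poissonMeasure]
  simp only [smul_eq_mul]
  rw [(hasSum_mul_sq_poissonMeasure r).tsum_eq]
  ring

lemma poissonMeasure_compl_zero_le (r : ℝ≥0) : Po(r) {0}ᶜ ≤ r := by
  rw [measure_compl (measurableSet_singleton 0) (measure_ne_top _ _), measure_univ,
    poissonMeasure_singleton, tsub_le_iff_right, ← ENNReal.ofReal_coe_nnreal,
    ← ENNReal.ofReal_add (by positivity) (by positivity), ← ENNReal.ofReal_one]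
  refine ENNReal.ofReal_le_ofReal ?_
  simpa [add_comm] using Real.add_one_le_exp (-r)

variable {Ω ι : Type*} [MeasurableSpace Ω] {P : Measure Ω}

lemma hasLaw_map_cast_poissonMeasure_of_measure_eq [IsProbabilityMeasure P] {X : Ω → ℝ≥0∞}
    {r : ℝ≥0} (hX : Measurable X) (h : ∀ n : ℕ, P {ω | X ω = n} = Po(r) {n}) :
    HasLaw X Po(ℝ≥0∞, r) P where
  aemeasurable := hX.aemeasurable
  map_eq := by
    -- The atoms of `P.map X` at the naturals already carry all of the mass.
    have := Measure.isProbabilityMeasure_map (μ := P) hX.aemeasurable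
    refine (Measure.eq_of_le_of_isProbabilityMeasure ?_).symm
    calc Po(ℝ≥0∞, r) = Measure.sum fun n : ℕ ↦ (P.map X).restrict {(n : ℝ≥0∞)} := by
          rw [poissonMeasure, Measure.map_sum .of_discrete]
          congr with n : 1
          rw [Measure.map_smul, Measure.map_dirac' .of_discrete, Measure.restrict_singleton,
            Measure.map_apply hX (measurableSet_singleton _), ← poissonMeasure_singleton, ← h]
          rfl
      _ = (P.map X).restrict (⋃ n : ℕ, {(n : ℝ≥0∞)}) :=
          (Measure.restrict_iUnion (fun i j hij ↦ by simpa using hij)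
            fun _ ↦ measurableSet_singleton _).symm
      _ ≤ P.map X := Measure.restrict_le_self

lemma HasLaw.toReal_map_cast_poissonMeasure {X : Ω → ℝ≥0∞} {r : ℝ≥0}
    (hX : HasLaw X Po(ℝ≥0∞, r) P) : HasLaw (fun ω ↦ (X ω).toReal) Po(ℝ, r) P := by
  refine HasLaw.fun_comp ⟨by fun_prop, ?_⟩ hX
  rw [Measure.map_map (by fun_prop) .of_discrete]
  exact congrArg (Measure.map · _) (funext ENNReal.toReal_natCast)

lemma integral_abs_sub_integral_le_sqrt_variance [IsProbabilityMeasure P] {X : Ω → ℝ}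
    (hX : MemLp X 2 P) : ∫ ω, |X ω - P[X]| ∂P ≤ √(Var[X; P]) := by
  have hdev : MemLp (fun ω ↦ |X ω - P[X]|) 2 P := (hX.sub (memLp_const _)).abs
  have hsq : ∫ ω, |X ω - P[X]| ^ 2 ∂P = Var[X; P] := by
    simp only [sq_abs, variance_eq_integral hX.aemeasurable]
  have h := variance_nonneg (fun ω ↦ |X ω - P[X]|) P
  rw [variance_eq_sub hdev] at h
  simp only [Pi.pow_apply, hsq] at h
  rw [Real.le_sqrt (integral_nonneg fun _ ↦ abs_nonneg _) (variance_nonneg _ _)]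
  linarith

lemma variance_sum_mul_of_iIndepFun {M : ι → Ω → ℝ} (hM : ∀ i, MemLp (M i) 2 P)
    (hind : iIndepFun M P) (s : Finset ι) (a : ι → ℝ) :
    Var[fun ω ↦ ∑ i ∈ s, a i * M i ω; P] = ∑ i ∈ s, a i ^ 2 * Var[M i; P] := by
  have h := IndepFun.variance_sum (X := fun i ω ↦ a i * M i ω) (s := s)
    (fun i _ ↦ (hM i).const_mul (a i))
    (fun i _ j _ hij ↦ (hind.indepFun hij).comp (measurable_const_mul (a i))
      (measurable_const_mul (a j)))
  simp only [variance_const_mul] at h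
  rw [← h]
  congr with ω
  simp

lemma HasLaw.memLp_map_cast_poissonMeasure {X : Ω → ℝ} {r : ℝ≥0}
    (hX : HasLaw X Po(ℝ, r) P) : MemLp X 2 P := by
  have h := memLp_id_map_cast_poissonMeasure r
  rw [← hX.map_eq, memLp_map_measure_iff (by fun_prop) hX.aemeasurable] at h
  exact h

lemma integral_abs_sum_mul_sub_le_sqrt [IsProbabilityMeasure P] {M : ι → Ω → ℝ}
    {ρ : ι → ℝ≥0} (hM : ∀ i, HasLaw (M i) Po(ℝ, ρ i) P) (hind : iIndepFun M P)
    (s : Finset ι) (a : ι → ℝ) :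
    ∫ ω, |∑ i ∈ s, a i * (M i ω - ρ i)| ∂P ≤ √(∑ i ∈ s, a i ^ 2 * ρ i) := by
  have hL2 : ∀ i, MemLp (M i) 2 P := fun i ↦ (hM i).memLp_map_cast_poissonMeasure
  have hS : MemLp (fun ω ↦ ∑ i ∈ s, a i * M i ω) 2 P :=
    memLp_finsetSum s fun i _ ↦ (hL2 i).const_mul (a i)
  have hmean : P[fun ω ↦ ∑ i ∈ s, a i * M i ω] = ∑ i ∈ s, a i * ρ i := by
    rw [integral_finsetSum s fun i _ ↦ ((hL2 i).integrable one_le_two).const_mul (a i)]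
    refine Finset.sum_congr rfl fun i _ ↦ ?_
    rw [integral_const_mul, (hM i).integral_eq, integral_id_map_cast_poissonMeasure]
  have hvar : Var[fun ω ↦ ∑ i ∈ s, a i * M i ω; P] = ∑ i ∈ s, a i ^ 2 * ρ i := by
    rw [variance_sum_mul_of_iIndepFun hL2 hind]
    refine Finset.sum_congr rfl fun i _ ↦ ?_
    rw [(hM i).variance_eq, variance_id_map_cast_poissonMeasure]
  have h := integral_abs_sub_integral_le_sqrt_variance hS
  rw [hmean, hvar] at h
  simpa only [mul_sub, Finset.sum_sub_distrib] using h

lemma HasLaw.measure_ne_zero_le {X : Ω → ℝ≥0∞} {r : ℝ≥0}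
    (hX : HasLaw X Po(ℝ≥0∞, r) P) : P {ω | X ω ≠ 0} ≤ r := by
  have h0 : MeasurableSet ({0}ᶜ : Set ℝ≥0∞) := (measurableSet_singleton 0).compl
  calc P {ω | X ω ≠ 0} = Po(ℝ≥0∞, r) {0}ᶜ := hX.measure_eq h0
    _ = Po(r) {0}ᶜ := by
        rw [Measure.map_apply .of_discrete h0]
        congr with n
        simp
    _ ≤ r := poissonMeasure_compl_zero_le r

lemma measureReal_biUnion_ne_zero_le {X : ι → Ω → ℝ≥0∞} {ρ : ι → ℝ≥0}
    (hX : ∀ i, HasLaw (X i) Po(ℝ≥0∞, ρ i) P) (s : Finset ι) :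
    P.real (⋃ i ∈ s, {ω | X i ω ≠ 0}) ≤ ∑ i ∈ s, (ρ i : ℝ) :=
  (measureReal_biUnion_finset_le s _).trans <| Finset.sum_le_sum fun i _ ↦
    ENNReal.toReal_le_of_le_ofReal (ρ i).coe_nonneg <| by
      simpa using (hX i).measure_ne_zero_le

lemma integral_min_abs_one_le_of_eqOn_compl [IsProbabilityMeasure P] {T Z : Ω → ℝ}
    {B : Set Ω} (hT : AEStronglyMeasurable T P) (hZ : Integrable Z P) (hB : NullMeasurableSet B P)
    (hTZ : EqOn T Z Bᶜ) :
    ∫ ω, min |T ω| 1 ∂P ≤ min (∫ ω, |Z ω| ∂P + P.real B) 1 := by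
  have hbound : ∀ ω, min |T ω| 1 ≤ 1 := fun ω ↦ min_le_right _ _
  have hint : Integrable (fun ω ↦ min |T ω| 1) P :=
    .of_bound (hT.norm.inf aestronglyMeasurable_const) 1 <| ae_of_all _ fun ω ↦ by
      rw [Real.norm_of_nonneg (by positivity)]
      exact hbound ω
  have hpt : ∀ ω, min |T ω| 1 ≤ |Z ω| + B.indicator (fun _ ↦ 1) ω := by
    intro ω
    by_cases hω : ω ∈ B
    · simp [hω]
    · simp [hω, hTZ hω]
  refine le_min ?_ ?_
  · calc ∫ ω, min |T ω| 1 ∂P ≤ ∫ ω, (|Z ω| + B.indicator (fun _ ↦ 1) ω) ∂P :=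
          integral_mono hint (hZ.abs.add ((integrable_const 1).indicator₀ hB)) hpt
      _ = ∫ ω, |Z ω| ∂P + P.real B := by
          rw [integral_add hZ.abs ((integrable_const 1).indicator₀ hB), integral_indicator₀ hB,
            setIntegral_const, smul_eq_mul, mul_one]
  · simpa using integral_mono hint (integrable_const 1) hbound

theorem integral_min_abs_compensated_sum_le [Fintype ι] [IsProbabilityMeasure P]
    {X : ι → Ω → ℝ≥0∞} {ρ : ι → ℝ≥0} (hX : ∀ i, HasLaw (X i) Po(ℝ≥0∞, ρ i) P)
    (hind : iIndepFun X P) (a : ι → ℝ) :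
    ∫ ω, min |∑ i, a i * (X i ω).toReal - ∑ i, (if |a i| ≤ 1 then a i * ρ i else 0)| 1 ∂P ≤
      2 * √(∑ i, min (a i ^ 2) 1 * ρ i) := by
  classical
  set small := Finset.univ.filter (|a ·| ≤ 1)
  set large := Finset.univ.filter (¬|a ·| ≤ 1)
  set B := ⋃ i ∈ large, {ω | X i ω ≠ 0}
  have hY : ∀ i, HasLaw (fun ω ↦ (X i ω).toReal) Po(ℝ, ρ i) P :=
    fun i ↦ (hX i).toReal_map_cast_poissonMeasure
  have hZ : Integrable (fun ω ↦ ∑ i ∈ small, a i * ((X i ω).toReal - ρ i)) P :=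
    integrable_finsetSum _ fun i _ ↦ (((hY i).memLp_map_cast_poissonMeasure.integrable
      one_le_two).sub (integrable_const _)).const_mul (a i)
  have hB : NullMeasurableSet B P := .biUnion (Finset.countable_toSet _) fun i _ ↦
    (hX i).aemeasurable.nullMeasurable (measurableSet_singleton 0).compl
  have hTZ : EqOn (fun ω ↦ ∑ i, a i * (X i ω).toReal -
      ∑ i, (if |a i| ≤ 1 then a i * ρ i else 0))
      (fun ω ↦ ∑ i ∈ small, a i * ((X i ω).toReal - ρ i)) Bᶜ := fun ω hω ↦
    Finset.sum_mul_sub_sum_ite_eq_sum_filter _ fun i hi ↦ by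
      have hω' : ∀ i, ¬|a i| ≤ 1 → X i ω = 0 := by simpa [B, large] using hω
      rw [hω' i hi, ENNReal.toReal_zero]
  calc _ ≤ min (∫ ω, |∑ i ∈ small, a i * ((X i ω).toReal - ρ i)| ∂P + P.real B) 1 :=
        integral_min_abs_one_le_of_eqOn_compl
          ((Finset.aemeasurable_fun_sum _ fun i _ ↦
            (hY i).aemeasurable.const_mul (a i)).sub_const _).aestronglyMeasurable hZ hB hTZ
    _ ≤ min (√(∑ i ∈ small, a i ^ 2 * ρ i) + ∑ i ∈ large, (ρ i : ℝ)) 1 :=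
        min_le_min_right 1 (add_le_add
          (integral_abs_sum_mul_sub_le_sqrt hY
            (hind.comp _ fun _ ↦ ENNReal.measurable_toReal) small a)
          (measureReal_biUnion_ne_zero_le hX large))
    _ ≤ 2 * √(∑ i, min (a i ^ 2) 1 * ρ i) := by
        rw [Finset.sum_min_sq_one_mul_eq]
        exact min_sqrt_add_one_le_two_mul_sqrt (by positivity) (by positivity)

end ProbabilityTheory

lemma IsPoissonRandomMeasure.hasLaw {Ω S : Type*} [MeasurableSpace Ω] [MeasurableSpace S]
    {P : Measure Ω} [IsProbabilityMeasure P] {N : Ω → Set S → ℝ≥0∞} {n : Measure S}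
    (hN : IsPoissonRandomMeasure P N n) {A : Set S} (hA : MeasurableSet A) (hfin : n A < ⊤) :
    HasLaw (fun ω ↦ N ω A) Po(ℝ≥0∞, (n A).toNNReal) P :=
  hasLaw_map_cast_poissonMeasure_of_measure_eq (hN.1 A hA) fun k ↦ by
    rw [poissonMeasure_singleton]
    exact hN.2.1 A hA hfin k

/-- For a simple function `f = Σ aⱼ 1_{Aⱼ}` (disjoint `Aⱼ` of finite `n`-measure), the
compensated Poisson integral `I_N(f) = ∫ f dN − ∫ f 1{|f| ≤ 1} dn` satisfies
`E(|I_N(f)| ∧ 1) ≤ 2 (∫ (|f|² ∧ 1) dn)^{1/2}`. -/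
theorem poisson_integral_simple_bound {Ω S : Type*} [MeasurableSpace Ω] [MeasurableSpace S]
    (P : Measure Ω) [IsProbabilityMeasure P]
    (N : Ω → Set S → ℝ≥0∞) (n : Measure S)
    (hN : IsPoissonRandomMeasure P N n)
    (k : ℕ) (A : Fin k → Set S) (a : Fin k → ℝ)
    (hAm : ∀ j, MeasurableSet (A j))
    (hdisj : Pairwise fun i j => Disjoint (A i) (A j))
    (hfin : ∀ j, n (A j) < ⊤) :
    ∫ ω, min |(∑ j, a j * (N ω (A j)).toReal) -
        ∑ j, (if |a j| ≤ 1 then a j * (n (A j)).toReal else 0)| 1 ∂P ≤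
      2 * Real.sqrt (∑ j, min ((a j) ^ 2) 1 * (n (A j)).toReal) := by
  exact integral_min_abs_compensated_sum_le (fun j ↦ hN.hasLaw (hAm j) (hfin j))
    (hN.2.2 k A hAm hdisj) a
end

section
/- Let Y be a nonnegative infinitely divisible random variable with drift c ≥ 0 and Lévy measure ρ on (0,∞) satisfying ∫ (y ∧ 1) ρ(dy) < ∞ and θ := E[Y] = c + ∫ y ρ(dy) ∈ (0,∞). Let Z be independent of Y with distribution L(Z)(dy) = (c/θ) δ_0(dy) + (y/θ) ρ(dy). Then for every bounded measurable f : R → R, E[f(Y + Z)] = E[f(Y) · Y/θ]. -/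
/-!
Both sides integrate `f` against a law on `[0, ∞)`: the law of `Y + Z` and the size-biased law
`(y / θ) P_Y(dy)`. Their Laplace transforms agree: differentiating the Lévy–Khintchine formula
`E e^{-αY} = e^{-Φ(α)}` gives `E[Y e^{-αY}] = Φ'(α) E e^{-αY}`, and
`Φ'(α) = c + ∫ y e^{-αy} ρ(dy) = θ E e^{-αZ}`, so by independence
`E[(Y / θ) e^{-αY}] = E e^{-αY} E e^{-αZ} = E e^{-α(Y+Z)}`. Laplace transforms determine finite
measures on `[0, ∞)`, since polynomials in `e^{-x}` separate points.
-/

open MeasureTheory ProbabilityTheory Set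
open scoped ENNReal NNReal BoundedContinuousFunction

noncomputable def NNReal.expNeg : ℝ≥0 →ᵇ ℝ :=
  .ofNormedAddCommGroup (fun x => Real.exp (-(x : ℝ))) (by fun_prop) 1
    fun x => by simp [abs_of_pos (Real.exp_pos _)]

theorem NNReal.measure_ext_of_integral_exp_neg_nat_mul {μ ν : Measure ℝ≥0}
    [IsFiniteMeasure μ] [IsFiniteMeasure ν]
    (h : ∀ n : ℕ, ∫ x, Real.exp (-(n * (x : ℝ))) ∂μ = ∫ x, Real.exp (-(n * (x : ℝ))) ∂ν) :
    μ = ν := by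
  refine ext_of_forall_mem_subalgebra_integral_eq_of_polish
    (A := StarAlgebra.adjoin ℝ {NNReal.expNeg}) ?_ fun g hg => ?_
  · intro x y hxy
    refine ⟨_, ⟨_, ⟨NNReal.expNeg, StarAlgebra.subset_adjoin _ _ rfl, rfl⟩, rfl⟩, ?_⟩
    simpa [NNReal.expNeg] using hxy
  · have hstar : star NNReal.expNeg = NNReal.expNeg := by ext; simp
    rw [← StarSubalgebra.mem_toSubalgebra, StarAlgebra.adjoin_toSubalgebra, star_singleton, hstar,
      union_self, Algebra.adjoin_singleton_eq_range_aeval] at hg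
    obtain ⟨p, rfl⟩ := hg
    induction p using Polynomial.induction_on' with
    | add p q hp hq =>
      simp only [map_add, BoundedContinuousFunction.coe_add, Pi.add_apply]
      rw [integral_add (BoundedContinuousFunction.integrable _ _)
          (BoundedContinuousFunction.integrable _ _),
        integral_add (BoundedContinuousFunction.integrable _ _)
          (BoundedContinuousFunction.integrable _ _), hp, hq]
    | monomial n a =>
      have hpow (x : ℝ≥0) : NNReal.expNeg x ^ n = Real.exp (-(n * (x : ℝ))) := by
        simp [NNReal.expNeg, ← Real.exp_nat_mul]
      simp [Polynomial.aeval_monomial, hpow, integral_const_mul, h n]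

theorem MeasureTheory.Measure.map_toNNReal_map_coe {μ : Measure ℝ} (hμ : ∀ᵐ x ∂μ, 0 ≤ x) :
    (μ.map Real.toNNReal).map ((↑) : ℝ≥0 → ℝ) = μ := by
  rw [Measure.map_map measurable_coe_nnreal_real measurable_real_toNNReal]
  conv_rhs => rw [← Measure.map_id (μ := μ)]
  exact Measure.map_congr (hμ.mono fun x hx => Real.coe_toNNReal x hx)

theorem MeasureTheory.Measure.ext_of_integral_exp_neg_nat_mul {μ ν : Measure ℝ}
    [IsFiniteMeasure μ] [IsFiniteMeasure ν] (hμ : ∀ᵐ x ∂μ, 0 ≤ x) (hν : ∀ᵐ x ∂ν, 0 ≤ x)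
    (h : ∀ n : ℕ, ∫ x, Real.exp (-(n * x)) ∂μ = ∫ x, Real.exp (-(n * x)) ∂ν) :
    μ = ν := by
  have integral_map_toNNReal (κ : Measure ℝ) (hκ : ∀ᵐ x ∂κ, 0 ≤ x) (n : ℕ) :
      ∫ x, Real.exp (-(n * (x : ℝ))) ∂κ.map Real.toNNReal = ∫ x, Real.exp (-(n * x)) ∂κ := by
    rw [integral_map measurable_real_toNNReal.aemeasurable (by fun_prop)]
    exact integral_congr_ae (hκ.mono fun x hx => by simp [Real.coe_toNNReal x hx])
  have hmap : μ.map Real.toNNReal = ν.map Real.toNNReal :=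
    NNReal.measure_ext_of_integral_exp_neg_nat_mul fun n => by
      rw [integral_map_toNNReal μ hμ, integral_map_toNNReal ν hν, h]
  rw [← μ.map_toNNReal_map_coe hμ, ← ν.map_toNNReal_map_coe hν, hmap]

theorem integral_withDensity_ofReal {α : Type*} [MeasurableSpace α] {μ : Measure α}
    {g : α → ℝ} (hg : Measurable g) (hg0 : ∀ᵐ x ∂μ, 0 ≤ g x) (f : α → ℝ) :
    ∫ x, f x ∂μ.withDensity (fun x => ENNReal.ofReal (g x)) = ∫ x, g x * f x ∂μ := by
  rw [integral_withDensity_eq_integral_toReal_smul hg.ennreal_ofReal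
    (.of_forall fun _ => ENNReal.ofReal_lt_top)]
  exact integral_congr_ae (hg0.mono fun x hx => by simp [ENNReal.toReal_ofReal hx])

section LaplaceTransform

variable {Ω : Type*} [MeasurableSpace Ω] {μ : Measure Ω} {X : Ω → ℝ}

theorem integrable_exp_neg_mul [IsFiniteMeasure μ] (hX : AEMeasurable X μ)
    (hX0 : ∀ᵐ ω ∂μ, 0 ≤ X ω) {t : ℝ} (ht : 0 ≤ t) :
    Integrable (fun ω => Real.exp (-(t * X ω))) μ := by
  refine (integrable_const 1).mono' (by fun_prop) (hX0.mono fun ω hω => ?_)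
  rw [Real.norm_eq_abs, abs_of_pos (Real.exp_pos _), Real.exp_le_one_iff]
  nlinarith

theorem hasDerivAt_integral_one_sub_exp_neg_mul (hX0 : ∀ᵐ ω ∂μ, 0 ≤ X ω)
    (hX : Integrable X μ) {s : ℝ} (hs : 0 < s) :
    HasDerivAt (fun t => ∫ ω, (1 - Real.exp (-(t * X ω))) ∂μ)
      (∫ ω, X ω * Real.exp (-(s * X ω)) ∂μ) s := by
  have hXm := hX.aestronglyMeasurable
  have hderiv (x t : ℝ) :
      HasDerivAt (fun t => 1 - Real.exp (-(t * x))) (x * Real.exp (-(t * x))) t := by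
    simpa [mul_comm] using ((hasDerivAt_mul_const (x := t) x).neg.exp).const_sub 1
  refine (hasDerivAt_integral_of_dominated_loc_of_deriv_le (bound := fun ω => |X ω|)
    (Metric.ball_mem_nhds s (half_pos hs)) (.of_forall fun t => by fun_prop) ?_ (by fun_prop)
    ?_ hX.abs (.of_forall fun ω t _ => hderiv (X ω) t)).2
  · refine (hX.const_mul s).mono' (by fun_prop) (hX0.mono fun ω hω => ?_)
    have hlower := Real.add_one_le_exp (-(s * X ω))
    have hupper : Real.exp (-(s * X ω)) ≤ 1 := Real.exp_le_one_iff.2 (by nlinarith)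
    rw [Real.norm_eq_abs, abs_of_nonneg (by linarith)]
    linarith
  · refine hX0.mono fun ω hω t ht => ?_
    have ht0 : 0 < t := by
      rw [Metric.mem_ball, Real.dist_eq] at ht
      linarith [(abs_lt.1 ht).1]
    have hupper : Real.exp (-(t * X ω)) ≤ 1 := Real.exp_le_one_iff.2 (by nlinarith)
    rw [norm_mul, Real.norm_eq_abs, Real.norm_eq_abs, abs_of_pos (Real.exp_pos _)]
    exact mul_le_of_le_one_right (abs_nonneg _) hupper

theorem hasDerivAt_integral_exp_neg_mul [IsProbabilityMeasure μ] (hX0 : ∀ᵐ ω ∂μ, 0 ≤ X ω)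
    (hX : Integrable X μ) {s : ℝ} (hs : 0 < s) :
    HasDerivAt (fun t => ∫ ω, Real.exp (-(t * X ω)) ∂μ)
      (-∫ ω, X ω * Real.exp (-(s * X ω)) ∂μ) s := by
  refine ((hasDerivAt_integral_one_sub_exp_neg_mul hX0 hX hs).const_sub 1).congr_of_eventuallyEq
    ((lt_mem_nhds hs).mono fun t ht => ?_)
  dsimp only
  rw [integral_sub (integrable_const 1)
    (integrable_exp_neg_mul hX.aemeasurable hX0 ht.le), integral_const, probReal_univ,
    one_smul, sub_sub_cancel]

noncomputable def laplaceExponent (c : ℝ) (ρ : Measure ℝ) (s : ℝ) : ℝ :=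
  s * c + ∫ y, (1 - Real.exp (-(s * y))) ∂ρ

theorem hasDerivAt_laplaceExponent {c : ℝ} {ρ : Measure ℝ} (hρ0 : ∀ᵐ y ∂ρ, 0 ≤ y)
    (hρ : Integrable id ρ) {s : ℝ} (hs : 0 < s) :
    HasDerivAt (laplaceExponent c ρ) (c + ∫ y, y * Real.exp (-(s * y)) ∂ρ) s :=
  (hasDerivAt_mul_const c).add (hasDerivAt_integral_one_sub_exp_neg_mul hρ0 hρ hs)

theorem integral_mul_exp_neg_mul_eq_of_laplace [IsProbabilityMeasure μ]
    (hX0 : ∀ᵐ ω ∂μ, 0 ≤ X ω) (hX : Integrable X μ) {c : ℝ} {ρ : Measure ℝ}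
    (hρ0 : ∀ᵐ y ∂ρ, 0 ≤ y) (hρ : Integrable id ρ)
    (hL : ∀ s, 0 < s → ∫ ω, Real.exp (-(s * X ω)) ∂μ = Real.exp (-laplaceExponent c ρ s))
    {α : ℝ} (hα : 0 < α) :
    ∫ ω, X ω * Real.exp (-(α * X ω)) ∂μ =
      (c + ∫ y, y * Real.exp (-(α * y)) ∂ρ) * ∫ ω, Real.exp (-(α * X ω)) ∂μ := by
  have hF := (hasDerivAt_laplaceExponent hρ0 hρ hα).neg.exp.congr_of_eventuallyEq
    ((lt_mem_nhds hα).mono fun s hs => hL s hs)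
  rw [Pi.neg_apply, ← hL α hα] at hF
  linarith [(hasDerivAt_integral_exp_neg_mul hX0 hX hα).unique hF]

theorem integral_exp_neg_mul_of_map_eq [IsFiniteMeasure μ] (hXm : Measurable X)
    (hX0 : ∀ᵐ ω ∂μ, 0 ≤ X ω) {c θ : ℝ} (hc : 0 ≤ c) (hθ : 0 < θ) {ρ : Measure ℝ}
    (hρ0 : ∀ᵐ y ∂ρ, 0 ≤ y)
    (hlaw : μ.map X = ENNReal.ofReal (c / θ) • Measure.dirac 0 +
      ρ.withDensity fun y => ENNReal.ofReal (y / θ))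
    {α : ℝ} (hα : 0 ≤ α) :
    ∫ ω, Real.exp (-(α * X ω)) ∂μ = (c + ∫ y, y * Real.exp (-(α * y)) ∂ρ) / θ := by
  have hint : Integrable (fun x => Real.exp (-(α * x))) (μ.map X) :=
    (integrable_map_measure (by fun_prop) hXm.aemeasurable).2
      (integrable_exp_neg_mul hXm.aemeasurable hX0 hα)
  rw [hlaw] at hint
  rw [← integral_map (f := fun x => Real.exp (-(α * x))) hXm.aemeasurable (by fun_prop), hlaw,
    integral_add_measure (hint.mono_measure (Measure.le_add_right le_rfl))
      (hint.mono_measure (Measure.le_add_left le_rfl)),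
    integral_smul_measure, integral_dirac,
    integral_withDensity_ofReal (by fun_prop) (hρ0.mono fun y hy => div_nonneg hy hθ.le),
    ENNReal.toReal_ofReal (div_nonneg hc hθ.le)]
  simp only [mul_zero, neg_zero, Real.exp_zero, smul_eq_mul, mul_one, div_mul_eq_mul_div,
    integral_div]
  ring

end LaplaceTransform

section SizeBiasedTranslation

variable {Ω : Type*} [MeasurableSpace Ω] {P : Measure Ω} [IsProbabilityMeasure P]
  {Y Z : Ω → ℝ} {c θ : ℝ} {ρ : Measure ℝ}

theorem integral_exp_neg_mul_add_eq (hYm : Measurable Y) (hZm : Measurable Z)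
    (hY0 : ∀ᵐ ω ∂P, 0 ≤ Y ω) (hY : Integrable Y P) (hZ0 : ∀ᵐ ω ∂P, 0 ≤ Z ω)
    (hc : 0 ≤ c) (hθ : 0 < θ) (hρ0 : ∀ᵐ y ∂ρ, 0 ≤ y) (hρ : Integrable id ρ)
    (hEY : ∫ ω, Y ω ∂P = θ)
    (hL : ∀ s, 0 < s → ∫ ω, Real.exp (-(s * Y ω)) ∂P = Real.exp (-laplaceExponent c ρ s))
    (hindep : IndepFun Y Z P)
    (hZlaw : P.map Z = ENNReal.ofReal (c / θ) • Measure.dirac 0 +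
      ρ.withDensity fun y => ENNReal.ofReal (y / θ))
    {α : ℝ} (hα : 0 ≤ α) :
    ∫ ω, Real.exp (-(α * (Y ω + Z ω))) ∂P = ∫ ω, Y ω / θ * Real.exp (-(α * Y ω)) ∂P := by
  rcases hα.eq_or_lt with rfl | hα
  · simp [integral_div, hEY, hθ.ne']
  simp_rw [mul_add, neg_add, Real.exp_add, div_mul_eq_mul_div, integral_div]
  rw [hindep.integral_fun_comp_mul_comp (f := fun x => Real.exp (-(α * x)))
      (g := fun x => Real.exp (-(α * x))) hYm.aemeasurable hZm.aemeasurable (by fun_prop)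
      (by fun_prop),
    integral_exp_neg_mul_of_map_eq hZm hZ0 hc hθ hρ0 hZlaw hα.le,
    integral_mul_exp_neg_mul_eq_of_laplace hY0 hY hρ0 hρ hL hα]
  ring

theorem map_add_eq_withDensity (hYm : Measurable Y) (hZm : Measurable Z)
    (hY0 : ∀ᵐ ω ∂P, 0 ≤ Y ω) (hY : Integrable Y P) (hZ0 : ∀ᵐ ω ∂P, 0 ≤ Z ω)
    (hc : 0 ≤ c) (hθ : 0 < θ) (hρ0 : ∀ᵐ y ∂ρ, 0 ≤ y) (hρ : Integrable id ρ)
    (hEY : ∫ ω, Y ω ∂P = θ)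
    (hL : ∀ s, 0 < s → ∫ ω, Real.exp (-(s * Y ω)) ∂P = Real.exp (-laplaceExponent c ρ s))
    (hindep : IndepFun Y Z P)
    (hZlaw : P.map Z = ENNReal.ofReal (c / θ) • Measure.dirac 0 +
      ρ.withDensity fun y => ENNReal.ofReal (y / θ)) :
    P.map (fun ω => Y ω + Z ω) = (P.map Y).withDensity fun x => ENNReal.ofReal (x / θ) := by
  have hmapY0 : ∀ᵐ x ∂P.map Y, 0 ≤ x := (ae_map_iff hYm.aemeasurable measurableSet_Ici).2 hY0
  have : IsFiniteMeasure ((P.map Y).withDensity fun x => ENNReal.ofReal (x / θ)) :=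
    isFiniteMeasure_withDensity_ofReal
      ((integrable_map_measure (g := fun x => x / θ) (by fun_prop) hYm.aemeasurable).2
        (hY.div_const θ)).2
  refine Measure.ext_of_integral_exp_neg_nat_mul
    ((ae_map_iff (by fun_prop) measurableSet_Ici).2
      (hY0.and hZ0 |>.mono fun ω h => add_nonneg h.1 h.2))
    ((withDensity_absolutelyContinuous _ _).ae_le hmapY0) fun n => ?_
  rw [integral_map (by fun_prop) (by fun_prop),
    integral_withDensity_ofReal (g := fun x => x / θ) (by fun_prop)
      (hmapY0.mono fun x hx => div_nonneg hx hθ.le),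
    integral_map hYm.aemeasurable (by fun_prop)]
  exact integral_exp_neg_mul_add_eq hYm hZm hY0 hY hZ0 hc hθ hρ0 hρ hEY hL hindep hZlaw
    n.cast_nonneg

end SizeBiasedTranslation

theorem size_biased_translation_identity_general {Ω : Type*} [MeasurableSpace Ω]
    (P : Measure Ω) [IsProbabilityMeasure P]
    (Y Z : Ω → ℝ) (hYm : Measurable Y) (hZm : Measurable Z)
    (hYpos : ∀ ω, 0 ≤ Y ω)
    (c θ : ℝ) (hc : 0 ≤ c) (hθpos : 0 < θ)
    (ρ : Measure ℝ) (hρneg : ρ (Set.Iic 0) = 0)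
    (hρmean : ∫⁻ y, ENNReal.ofReal y ∂ρ < ⊤)
    (hEY : ∫ ω, Y ω ∂P = θ)
    (hLaplace : ∀ α : ℝ, 0 ≤ α →
      ∫ ω, Real.exp (-(α * Y ω)) ∂P =
        Real.exp (-(α * c) -
          (∫⁻ y, ENNReal.ofReal (1 - Real.exp (-(α * y))) ∂ρ).toReal))
    (hindep : IndepFun Y Z P)
    (hZlaw : P.map Z =
      (ENNReal.ofReal (c / θ)) • Measure.dirac (0 : ℝ) +
        ρ.withDensity fun y => ENNReal.ofReal (y / θ)) :
    ∀ f : ℝ → ℝ, Measurable f → (∃ C, ∀ x, |f x| ≤ C) →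
      ∫ ω, f (Y ω + Z ω) ∂P = ∫ ω, f (Y ω) * (Y ω / θ) ∂P := by
  intro f hf _
  have hY0 : ∀ᵐ ω ∂P, 0 ≤ Y ω := .of_forall hYpos
  have hY : Integrable Y P := .of_integral_ne_zero (hEY ▸ hθpos.ne')
  have hρ0 : ∀ᵐ y ∂ρ, 0 ≤ y :=
    measure_mono_null (fun y (hy : ¬0 ≤ y) => (not_le.1 hy).le) hρneg
  have hρ : Integrable id ρ :=
    ⟨aestronglyMeasurable_id, (hasFiniteIntegral_iff_ofReal hρ0).2 hρmean⟩
  have hZ0 : ∀ᵐ ω ∂P, 0 ≤ Z ω := by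
    refine ae_of_ae_map hZm.aemeasurable ?_
    rw [hZlaw, ae_add_measure_iff]
    exact ⟨Measure.ae_smul_measure (by simp) _, (withDensity_absolutelyContinuous _ _).ae_le hρ0⟩
  have hL (s : ℝ) (hs : 0 < s) :
      ∫ ω, Real.exp (-(s * Y ω)) ∂P = Real.exp (-laplaceExponent c ρ s) := by
    rw [hLaplace s hs.le, laplaceExponent, neg_add, ← sub_eq_add_neg,
      integral_eq_lintegral_of_nonneg_ae (hρ0.mono fun y hy => ?_) (by fun_prop)]
    simpa using Real.exp_le_one_iff.2 (neg_nonpos.2 (mul_nonneg hs.le hy))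
  calc ∫ ω, f (Y ω + Z ω) ∂P
      = ∫ x, f x ∂(P.map Y).withDensity fun x => ENNReal.ofReal (x / θ) := by
        rw [← map_add_eq_withDensity hYm hZm hY0 hY hZ0 hc hθpos hρ0 hρ hEY hL hindep hZlaw,
          integral_map (by fun_prop) hf.aestronglyMeasurable]
    _ = ∫ ω, f (Y ω) * (Y ω / θ) ∂P := by
        rw [integral_withDensity_ofReal (g := fun x => x / θ) (by fun_prop)
            ((ae_map_iff hYm.aemeasurable (measurableSet_le measurable_const (by fun_prop))).2
              (hY0.mono fun ω h => div_nonneg h hθpos.le)),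
          integral_map hYm.aemeasurable (by fun_prop)]
        simp_rw [mul_comm]

/-- For a nonnegative infinitely divisible random variable `Y` with drift `c` and Lévy
measure `ρ` on `(0,∞)`, mean `θ = c + ∫ y ρ(dy) ∈ (0,∞)`, and `Z` independent of `Y`
with law `(c/θ) δ₀ + (y/θ) ρ(dy)`, one has `E[f(Y + Z)] = E[f(Y) Y/θ]` for all bounded
measurable `f`. -/
theorem size_biased_translation_identity {Ω : Type*} [MeasurableSpace Ω]
    (P : Measure Ω) [IsProbabilityMeasure P]
    (Y Z : Ω → ℝ) (hYm : Measurable Y) (hZm : Measurable Z)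
    (hYpos : ∀ ω, 0 ≤ Y ω)
    (c θ : ℝ) (hc : 0 ≤ c) (hθpos : 0 < θ)
    (ρ : Measure ℝ) (hρneg : ρ (Set.Iic 0) = 0)
    (hρmin : ∫⁻ y, ENNReal.ofReal (min y 1) ∂ρ < ⊤)
    (hρmean : ∫⁻ y, ENNReal.ofReal y ∂ρ < ⊤)
    (hθeq : θ = c + (∫⁻ y, ENNReal.ofReal y ∂ρ).toReal)
    (hEY : ∫ ω, Y ω ∂P = θ)
    (hLaplace : ∀ α : ℝ, 0 ≤ α →
      ∫ ω, Real.exp (-(α * Y ω)) ∂P =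
        Real.exp (-(α * c) -
          (∫⁻ y, ENNReal.ofReal (1 - Real.exp (-(α * y))) ∂ρ).toReal))
    (hindep : IndepFun Y Z P)
    (hZlaw : P.map Z =
      (ENNReal.ofReal (c / θ)) • Measure.dirac (0 : ℝ) +
        ρ.withDensity fun y => ENNReal.ofReal (y / θ)) :
    ∀ f : ℝ → ℝ, Measurable f → (∃ C, ∀ x, |f x| ≤ C) →
      ∫ ω, f (Y ω + Z ω) ∂P = ∫ ω, f (Y ω) * (Y ω / θ) ∂P :=
  size_biased_translation_identity_general P Y Z hYm hZm hYpos c θ hc hθpos ρ hρneg hρmean hEY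
    hLaplace hindep hZlaw
end

section
/- Let Y be a nonnegative random variable with θ := E[Y] ∈ (0,∞). Suppose there exists a nonnegative random variable Z independent of Y such that E[f(Y + Z)] = E[f(Y) · Y/θ] for all bounded measurable f : R → R. Then Y is infinitely divisible; moreover its Lévy measure ρ satisfies ρ(dy) = θ 1{y > 0} y^{−1} L(Z)(dy) and its drift equals θ P(Z = 0). -/
/-!
Write `M(t) = E e^{tY}` and `N(t) = E e^{tZ}` for `t ≤ 0`. Testing the size-bias identity against
`x ↦ e^{tx}` and using independence gives `M'(t) = E[Y e^{tY}] = θ N(t) M(t)` for `t < 0`, so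
`M(-α) = exp(-θ ∫_{-α}^0 N)`. By Fubini, `∫_{-α}^0 N = E ∫_{-α}^0 e^{tZ} dt`, and the inner
integral is `α` on `{Z = 0}` and `(1 - e^{-αZ}) / Z` elsewhere.
-/

open MeasureTheory ProbabilityTheory Set Real

section NonnegMGF

variable {Ω : Type*} [MeasurableSpace Ω] {μ : Measure Ω} [IsFiniteMeasure μ] {X : Ω → ℝ}

lemma integrable_exp_mul_of_nonpos (hX : AEMeasurable X μ) (hX0 : 0 ≤ᵐ[μ] X) {t : ℝ}
    (ht : t ≤ 0) : Integrable (fun ω ↦ exp (t * X ω)) μ := by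
  refine .of_mem_Icc 0 1 (measurable_exp.comp_aemeasurable (hX.const_mul t)) ?_
  filter_upwards [hX0] with ω hω
  exact ⟨(exp_pos _).le, exp_le_one_iff.2 (mul_nonpos_of_nonpos_of_nonneg ht hω)⟩

lemma Iio_subset_interior_integrableExpSet (hX : AEMeasurable X μ) (hX0 : 0 ≤ᵐ[μ] X) :
    Iio 0 ⊆ interior (integrableExpSet X μ) := by
  rw [← interior_Iic]
  exact interior_mono fun t ht ↦ integrable_exp_mul_of_nonpos hX hX0 ht

lemma continuousOn_mgf_Iic (hX : AEMeasurable X μ) (hX0 : 0 ≤ᵐ[μ] X) :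
    ContinuousOn (mgf X μ) (Iic 0) := by
  refine continuousOn_of_dominated (bound := fun _ ↦ 1) (fun t _ ↦ aemeasurable_exp_mul t hX)
    (fun t ht ↦ ?_) (integrable_const 1) (ae_of_all _ fun ω ↦ by fun_prop)
  filter_upwards [hX0] with ω hω
  rw [norm_of_nonneg (exp_pos _).le]
  exact exp_le_one_iff.2 (mul_nonpos_of_nonpos_of_nonneg ht hω)

end NonnegMGF

lemma eq_mul_exp_neg_integral_of_hasDerivAt {φ g : ℝ → ℝ} {a b : ℝ} (hab : a ≤ b)
    (hφ : ContinuousOn φ (Icc a b)) (hφ_pos : ∀ x ∈ Icc a b, 0 < φ x)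
    (hg : IntervalIntegrable g volume a b)
    (hderiv : ∀ x ∈ Ioo a b, HasDerivAt φ (g x * φ x) x) :
    φ a = φ b * exp (-∫ x in a..b, g x) := by
  have hlog : ∫ x in a..b, g x = log (φ b) - log (φ a) := by
    refine intervalIntegral.integral_eq_sub_of_hasDerivAt_of_le hab
      (hφ.log fun x hx ↦ (hφ_pos x hx).ne') (fun x hx ↦ ?_) hg
    have hx := (hφ_pos x (Ioo_subset_Icc_self hx)).ne'
    simpa only [mul_div_cancel_right₀ _ hx] using (hderiv x ‹_›).log hx
  rw [hlog, neg_sub, exp_sub, exp_log (hφ_pos b ⟨hab, le_rfl⟩), exp_log (hφ_pos a ⟨le_rfl, hab⟩)]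
  field_simp [(hφ_pos b ⟨hab, le_rfl⟩).ne']

lemma integral_exp_mul_of_ne_zero {y : ℝ} (hy : y ≠ 0) (α : ℝ) :
    ∫ t in -α..0, exp (t * y) = (1 - exp (-(α * y))) / y := by
  rw [intervalIntegral.integral_comp_mul_right (fun x ↦ exp x) hy, integral_exp,
    smul_eq_mul, zero_mul, exp_zero, neg_mul, div_eq_inv_mul]

lemma intervalIntegral_mgf_id_eq {ν : Measure ℝ} [IsFiniteMeasure ν] (hν : ∀ᵐ y ∂ν, 0 ≤ y)
    {α : ℝ} (hα : 0 ≤ α) :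
    ∫ t in -α..0, mgf id ν t = α * ν.real {0} + ∫ y in Ioi 0, (1 - exp (-(α * y))) / y ∂ν := by
  have hint : Integrable (Function.uncurry fun t y ↦ exp (t * y))
      ((volume.restrict (Ioc (-α) 0)).prod ν) := by
    refine .of_mem_Icc 0 1 (by fun_prop) ?_
    filter_upwards [Measure.quasiMeasurePreserving_fst.ae (ae_restrict_mem measurableSet_Ioc),
      Measure.quasiMeasurePreserving_snd.ae hν] with p ht hy
    exact ⟨(exp_pos _).le, exp_le_one_iff.2 (mul_nonpos_of_nonpos_of_nonneg ht.2 hy)⟩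
  have hK : Integrable (fun y ↦ ∫ t in -α..0, exp (t * y)) ν := by
    simpa [intervalIntegral.integral_of_le (neg_nonpos.2 hα)] using hint.integral_prod_right
  have hcompl : ({0}ᶜ : Set ℝ) =ᵐ[ν] Ioi 0 := by
    filter_upwards [hν] with y hy
    exact propext hy.lt_iff_ne'.symm
  simp only [mgf, id]
  rw [intervalIntegral_integral_swap (by rwa [uIoc_of_le (neg_nonpos.2 hα)]),
    ← integral_add_compl (measurableSet_singleton 0) hK, integral_singleton,
    setIntegral_congr_set hcompl,
    setIntegral_congr_fun measurableSet_Ioi fun y hy ↦ integral_exp_mul_of_ne_zero hy.ne' α]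
  simp [mul_comm]

section SizeBias

variable {Ω : Type*} [MeasurableSpace Ω] {P : Measure Ω} {Y Z : Ω → ℝ} {θ t : ℝ}

lemma mgf_add_eq_integral_mul_exp_div (hYpos : ∀ ω, 0 ≤ Y ω) (hZpos : ∀ ω, 0 ≤ Z ω)
    (hiso : ∀ f : ℝ → ℝ, Measurable f → (∃ C, ∀ x, |f x| ≤ C) →
      ∫ ω, f (Y ω + Z ω) ∂P = ∫ ω, f (Y ω) * (Y ω / θ) ∂P)
    (ht : t ≤ 0) :
    mgf (Y + Z) P t = P[fun ω ↦ Y ω * exp (t * Y ω)] / θ := by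
  -- `x ↦ exp (t * x)` is unbounded on `ℝ`, but agrees on `[0, ∞)` with a bounded function.
  have hbdd : ∀ x, |exp (t * max x 0)| ≤ 1 := fun x ↦ by
    rw [abs_of_pos (exp_pos _), exp_le_one_iff]
    exact mul_nonpos_of_nonpos_of_nonneg ht (le_max_right x 0)
  have h := hiso (fun x ↦ exp (t * max x 0)) (by fun_prop) ⟨1, hbdd⟩
  simp only [max_eq_left (add_nonneg (hYpos _) (hZpos _)), max_eq_left (hYpos _)] at h
  rw [mgf, ← integral_div]
  simpa only [Pi.add_apply, mul_div_right_comm, mul_comm (exp _)] using h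

lemma hasDerivAt_mgf_of_size_bias [IsFiniteMeasure P] (hYm : Measurable Y) (hZm : Measurable Z)
    (hYpos : ∀ ω, 0 ≤ Y ω) (hZpos : ∀ ω, 0 ≤ Z ω) (hθ : θ ≠ 0) (hindep : IndepFun Y Z P)
    (hiso : ∀ f : ℝ → ℝ, Measurable f → (∃ C, ∀ x, |f x| ≤ C) →
      ∫ ω, f (Y ω + Z ω) ∂P = ∫ ω, f (Y ω) * (Y ω / θ) ∂P)
    (ht : t < 0) :
    HasDerivAt (mgf Y P) (θ * mgf Z P t * mgf Y P t) t := by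
  have hsize := mgf_add_eq_integral_mul_exp_div hYpos hZpos hiso ht.le
  rw [hindep.mgf_add' hYm.aestronglyMeasurable hZm.aestronglyMeasurable, eq_div_iff hθ] at hsize
  convert hasDerivAt_mgf (Iio_subset_interior_integrableExpSet (μ := P) hYm.aemeasurable
    (ae_of_all _ hYpos) ht) using 1
  rw [← hsize]
  ring

end SizeBias

theorem infinitely_divisible_of_size_biased_identity_general {Ω : Type*} [MeasurableSpace Ω]
    (P : Measure Ω) [IsProbabilityMeasure P]
    (Y Z : Ω → ℝ) (hYm : Measurable Y) (hZm : Measurable Z)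
    (hYpos : ∀ ω, 0 ≤ Y ω) (hZpos : ∀ ω, 0 ≤ Z ω)
    (θ : ℝ) (hθpos : 0 < θ)
    (hindep : IndepFun Y Z P)
    (hiso : ∀ f : ℝ → ℝ, Measurable f → (∃ C, ∀ x, |f x| ≤ C) →
      ∫ ω, f (Y ω + Z ω) ∂P = ∫ ω, f (Y ω) * (Y ω / θ) ∂P) :
    ∀ α : ℝ, 0 ≤ α →
      ∫ ω, Real.exp (-(α * Y ω)) ∂P =
        Real.exp (-(α * θ * (P {ω | Z ω = 0}).toReal) -
          θ * ∫ y in Set.Ioi (0 : ℝ), (1 - Real.exp (-(α * y))) / y ∂(P.map Z)) := by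
  intro α hα
  have hY0 : 0 ≤ᵐ[P] Y := ae_of_all _ hYpos
  have hZ0 : 0 ≤ᵐ[P] Z := ae_of_all _ hZpos
  have hlaw := eq_mul_exp_neg_integral_of_hasDerivAt (g := fun t ↦ θ * mgf Z P t)
    (neg_nonpos.2 hα) ((continuousOn_mgf_Iic hYm.aemeasurable hY0).mono Icc_subset_Iic_self)
    (fun t ht ↦ mgf_pos (integrable_exp_mul_of_nonpos hYm.aemeasurable hY0 ht.2))
    (continuousOn_const.mul ((continuousOn_mgf_Iic hZm.aemeasurable hZ0).mono
      (uIcc_of_le (neg_nonpos.2 hα) ▸ Icc_subset_Iic_self))).intervalIntegrable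
    fun t ht ↦ hasDerivAt_mgf_of_size_bias hYm hZm hYpos hZpos hθpos.ne' hindep hiso ht.2
  rw [mgf_zero, one_mul, intervalIntegral.integral_const_mul, ← mgf_id_map hZm.aemeasurable,
    intervalIntegral_mgf_id_eq ((ae_map_iff hZm.aemeasurable measurableSet_Ici).2 hZ0) hα,
    map_measureReal_apply hZm (measurableSet_singleton 0), measureReal_def] at hlaw
  simp only [preimage, mem_singleton_iff] at hlaw
  have hmgf : ∫ ω, exp (-(α * Y ω)) ∂P = mgf Y P (-α) := by simp only [mgf, neg_mul]
  rw [hmgf, hlaw]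
  congr 1
  ring

/-- If `Y ≥ 0` with `θ = E[Y] ∈ (0,∞)` admits a nonnegative `Z` independent of `Y` with
`E[f(Y + Z)] = E[f(Y) Y/θ]` for all bounded measurable `f`, then `Y` is infinitely
divisible with drift `θ P(Z = 0)` and Lévy measure `θ 1{y>0} y⁻¹ L(Z)(dy)`; i.e. its
Laplace transform is
`E e^{−αY} = exp(−α θ P(Z=0) − θ ∫_{(0,∞)} (1 − e^{−αy}) y⁻¹ L(Z)(dy))`. -/
theorem infinitely_divisible_of_size_biased_identity {Ω : Type*} [MeasurableSpace Ω]
    (P : Measure Ω) [IsProbabilityMeasure P]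
    (Y Z : Ω → ℝ) (hYm : Measurable Y) (hZm : Measurable Z)
    (hYpos : ∀ ω, 0 ≤ Y ω) (hZpos : ∀ ω, 0 ≤ Z ω)
    (hYint : Integrable Y P)
    (θ : ℝ) (hθpos : 0 < θ) (hEY : ∫ ω, Y ω ∂P = θ)
    (hindep : IndepFun Y Z P)
    (hiso : ∀ f : ℝ → ℝ, Measurable f → (∃ C, ∀ x, |f x| ≤ C) →
      ∫ ω, f (Y ω + Z ω) ∂P = ∫ ω, f (Y ω) * (Y ω / θ) ∂P) :
    ∀ α : ℝ, 0 ≤ α →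
      ∫ ω, Real.exp (-(α * Y ω)) ∂P =
        Real.exp (-(α * θ * (P {ω | Z ω = 0}).toReal) -
          θ * ∫ y in Set.Ioi (0 : ℝ), (1 - Real.exp (-(α * y))) / y ∂(P.map Z)) :=
  infinitely_divisible_of_size_biased_identity_general P Y Z hYm hZm hYpos hZpos θ hθpos hindep hiso
end

section
/- Let Y = (Y_1,…,Y_n) be a nonnegative random vector with θ_k := E[Y_k] ∈ (0,∞), and suppose for each k ≤ n there is a nonnegative random vector Z^k independent of Y such that E[F(Y + Z^k)] = E[F(Y) · Y_k/θ_k] for all bounded measurable F : R^n → R. Then for all j, k ≤ n and all bounded measurable F, θ_j E[F(Z^j) Z^j_k] = θ_k E[F(Z^k) Z^k_j]. -/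
open MeasureTheory ProbabilityTheory Set Real BoundedContinuousFunction
open scoped ENNReal NNReal

/-!
Test the size-bias identity against `F(x) = exp(-⟪s, x⟫)` and `F(x) = exp(-⟪s, x⟫) x_b`
(`s > 0`). Independence and `exp(-⟪s, y + z⟫) = exp(-⟪s, y⟫) exp(-⟪s, z⟫)` turn the two identities
into `θ_a L M_a = R_a` and `θ_a (R_b M_a + L N_ab) = E[e^{-⟪s,Y⟫} Y_a Y_b]`, where `L`, `M_a`, `R_a`
and `N_ab` are the Laplace transforms of `Y`, `Z^a`, `Y_a · Y` and `Z^a_b · Z^a`. The right-hand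
side is symmetric in `a, b`, and so is `θ_a R_b M_a = θ_a θ_b L M_a M_b`; as `L > 0`, this gives
`θ_a N_ab = θ_b N_ba`. So the measures `θ_a Z^a_b dP ∘ (Z^a)⁻¹` and `θ_b Z^b_a dP ∘ (Z^b)⁻¹` on the
orthant have the same Laplace transform on `(0, ∞)ⁿ`. Tilted by `e^{-∑ x_i}` they become finite,
and finite measures on `[0, ∞)ⁿ` are determined by their Laplace transforms at integer points
(Stone–Weierstrass for the algebra generated by the `x ↦ e^{-x_i}`), so the two measures agree.
-/

namespace MeasureTheory

variable {ι : Type*}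

noncomputable def expNegCoord (i : ι) : (ι → ℝ≥0) →ᵇ ℝ :=
  ofNormedAddCommGroup (fun x => exp (-(x i : ℝ))) (by fun_prop) 1 fun x => by
    simp [abs_of_pos (exp_pos _), (x i).coe_nonneg]

@[simp]
lemma expNegCoord_apply (i : ι) (x : ι → ℝ≥0) : expNegCoord i x = exp (-(x i : ℝ)) := rfl

lemma star_range_expNegCoord : star (range (expNegCoord (ι := ι))) = range expNegCoord := by
  have h : ∀ i : ι, star (expNegCoord i) = expNegCoord i := fun i => by ext x; simp
  ext g
  simp only [Set.mem_star, Set.mem_range]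
  exact ⟨fun ⟨i, hi⟩ => ⟨i, by rw [← star_star g, ← hi, h]⟩, fun ⟨i, hi⟩ => ⟨i, by rw [← hi, h]⟩⟩

variable [Fintype ι]

lemma prod_expNegCoord_pow_apply (m : ι → ℕ) (x : ι → ℝ≥0) :
    (∏ i, expNegCoord i ^ m i) x = exp (-∑ i, (m i : ℝ) * x i) := by
  simp only [coe_prod, coe_pow, Finset.prod_apply, Pi.pow_apply, expNegCoord_apply, ← exp_nat_mul,
    ← exp_sum, Finset.sum_neg_distrib, mul_neg]

lemma integral_exp_neg_eq_toReal_lintegral (μ : Measure (ι → ℝ≥0)) (m : ι → ℕ) :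
    ∫ x, exp (-∑ i, (m i : ℝ) * x i) ∂μ
      = (∫⁻ x, ENNReal.ofReal (exp (-∑ i, (m i : ℝ) * x i)) ∂μ).toReal :=
  integral_eq_lintegral_of_nonneg_ae (ae_of_all _ fun _ => (exp_pos _).le)
    (by fun_prop : Continuous _).aestronglyMeasurable

theorem Measure.ext_of_lintegral_exp_neg_nat {μ ν : Measure (ι → ℝ≥0)}
    [IsFiniteMeasure μ] [IsFiniteMeasure ν]
    (h : ∀ m : ι → ℕ, ∫⁻ x, ENNReal.ofReal (exp (-∑ i, (m i : ℝ) * x i)) ∂μ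
      = ∫⁻ x, ENNReal.ofReal (exp (-∑ i, (m i : ℝ) * x i)) ∂ν) : μ = ν := by
  let A := StarAlgebra.adjoin ℝ (range (expNegCoord (ι := ι)))
  refine ext_of_forall_mem_subalgebra_integral_eq_of_polish (A := A) ?_ fun g hg => ?_
  · rintro x y hxy
    obtain ⟨i, hi⟩ := Function.ne_iff.1 hxy
    refine ⟨_, ⟨_, ⟨expNegCoord i, StarAlgebra.subset_adjoin ℝ _ ⟨i, rfl⟩, rfl⟩, rfl⟩, ?_⟩
    simpa using hi
  · have hg' : g ∈ Subalgebra.toSubmodule A.toSubalgebra := hg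
    rw [StarAlgebra.adjoin_eq_span, star_range_expNegCoord, Set.union_self] at hg'
    clear hg
    induction hg' using Submodule.span_induction with
    | mem p hp =>
      obtain ⟨m, rfl⟩ := Submonoid.mem_closure_range_iff_of_fintype.1 hp
      simp only [prod_expNegCoord_pow_apply, integral_exp_neg_eq_toReal_lintegral, h]
    | zero => simp
    | add p q _ _ hp hq =>
      simp only [BoundedContinuousFunction.coe_add, Pi.add_apply]
      rw [integral_add (p.integrable _) (q.integrable _),
        integral_add (p.integrable _) (q.integrable _), hp, hq]
    | smul c p _ hp => simp only [BoundedContinuousFunction.coe_smul, integral_smul, hp]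

lemma lintegral_exp_neg_withDensity_exp_neg (μ : Measure (ι → ℝ≥0)) (s : ι → ℝ) :
    ∫⁻ x, ENNReal.ofReal (exp (-∑ i, s i * x i))
        ∂(μ.withDensity fun x => ENNReal.ofReal (exp (-∑ i, (x i : ℝ))))
      = ∫⁻ x, ENNReal.ofReal (exp (-∑ i, (s i + 1) * x i)) ∂μ := by
  rw [lintegral_withDensity_eq_lintegral_mul _ (by fun_prop) (by fun_prop)]
  refine lintegral_congr fun x => ?_
  simp only [Pi.mul_apply, ← ENNReal.ofReal_mul (exp_pos _).le, ← exp_add, add_mul, one_mul,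
    Finset.sum_add_distrib]
  ring_nf

theorem Measure.ext_of_lintegral_exp_neg_eq {μ ν : Measure (ι → ℝ≥0)}
    (hμ : ∫⁻ x, ENNReal.ofReal (exp (-∑ i, (x i : ℝ))) ∂μ ≠ ∞)
    (h : ∀ s : ι → ℝ, (∀ i, 0 < s i) → ∫⁻ x, ENNReal.ofReal (exp (-∑ i, s i * x i)) ∂μ
      = ∫⁻ x, ENNReal.ofReal (exp (-∑ i, s i * x i)) ∂ν) : μ = ν := by
  set w : (ι → ℝ≥0) → ℝ≥0∞ := fun x => ENNReal.ofReal (exp (-∑ i, (x i : ℝ)))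
  have hw : Measurable w := by fun_prop
  have h1 : ∫⁻ x, w x ∂μ = ∫⁻ x, w x ∂ν := by simpa using h 1 fun _ => one_pos
  have : IsFiniteMeasure (μ.withDensity w) := isFiniteMeasure_withDensity hμ
  have : IsFiniteMeasure (ν.withDensity w) := isFiniteMeasure_withDensity (h1 ▸ hμ)
  have htilt : μ.withDensity w = ν.withDensity w :=
    Measure.ext_of_lintegral_exp_neg_nat fun m => by
      simp only [w, lintegral_exp_neg_withDensity_exp_neg]
      exact h _ fun i => by positivity
  have hw0 : ∀ x, w x ≠ 0 := fun x => by simp [w, exp_pos]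
  have hwtop : ∀ x, w x ≠ ∞ := fun x => ENNReal.ofReal_ne_top
  calc μ = (μ.withDensity w).withDensity fun x => (w x)⁻¹ :=
        (withDensity_inv_same hw (ae_of_all _ hw0) (ae_of_all _ hwtop)).symm
    _ = (ν.withDensity w).withDensity fun x => (w x)⁻¹ := by rw [htilt]
    _ = ν := withDensity_inv_same hw (ae_of_all _ hw0) (ae_of_all _ hwtop)

end MeasureTheory

section SizeBias

variable {Ω ι : Type*} [MeasurableSpace Ω]

lemma ProbabilityTheory.IndepFun.integral_comp_mul_comp_of_measurable {α β : Type*}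
    [MeasurableSpace α] [MeasurableSpace β] {P : Measure Ω} {Y : Ω → α} {Z : Ω → β}
    (hind : IndepFun Y Z P) (hY : Measurable Y) (hZ : Measurable Z) {φ : α → ℝ} {ψ : β → ℝ}
    (hφ : Measurable φ) (hψ : Measurable ψ) :
    ∫ ω, φ (Y ω) * ψ (Z ω) ∂P = (∫ ω, φ (Y ω) ∂P) * ∫ ω, ψ (Z ω) ∂P :=
  (hind.comp hφ hψ).integral_mul_eq_mul_integral (hφ.comp hY).aestronglyMeasurable
    (hψ.comp hZ).aestronglyMeasurable

/-- For `θ = E[Y a]`: `Y + Z` has the law of `Y` size-biased by `Y a`. -/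
def IsSizeBiasShift (P : Measure Ω) (Y Z : Ω → ι → ℝ) (a : ι) (θ : ℝ) : Prop :=
  ∀ F : (ι → ℝ) → ℝ, Measurable F → (∃ C, ∀ x, |F x| ≤ C) →
    ∫ ω, F (Y ω + Z ω) ∂P = ∫ ω, F (Y ω) * (Y ω a / θ) ∂P

theorem IsSizeBiasShift.integral_comp_add {P : Measure Ω} {Y Z : Ω → ι → ℝ} {a : ι} {θ : ℝ}
    (h : IsSizeBiasShift P Y Z a θ) (hY : ∀ ω, 0 ≤ Y ω) (hZ : ∀ ω, 0 ≤ Z ω)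
    {G : (ι → ℝ) → ℝ} (hG : Measurable G) {C : ℝ} (hGC : ∀ x, 0 ≤ x → |G x| ≤ C) :
    ∫ ω, G (Y ω + Z ω) ∂P = ∫ ω, G (Y ω) * (Y ω a / θ) ∂P := by
  have hpos : ∀ x : ι → ℝ, 0 ≤ x → (fun i => (x i)⁺) = x := fun x hx =>
    funext fun i => posPart_eq_self.2 (hx i)
  have := h (fun x => G fun i => (x i)⁺) (hG.comp (by fun_prop))
    ⟨C, fun x => hGC _ fun i => posPart_nonneg _⟩
  simpa only [hpos _ (hY _), hpos _ (add_nonneg (hY _) (hZ _))] using this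

variable [Fintype ι]

lemma abs_exp_neg_sum_mul_le_one {s z : ι → ℝ} (hs : ∀ i, 0 ≤ s i) (hz : ∀ i, 0 ≤ z i) :
    |exp (-∑ i, s i * z i)| ≤ 1 := by
  rw [abs_of_pos (exp_pos _)]
  exact exp_le_one_iff.2 <| neg_nonpos.2 <| Finset.sum_nonneg fun i _ => mul_nonneg (hs i) (hz i)

lemma abs_exp_neg_sum_mul_mul_le_inv {s z : ι → ℝ} (hs : ∀ i, 0 ≤ s i) (hz : ∀ i, 0 ≤ z i)
    {b : ι} (hsb : 0 < s b) : |exp (-∑ i, s i * z i) * z b| ≤ (s b)⁻¹ := by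
  have hsum : s b * z b ≤ ∑ i, s i * z i :=
    Finset.single_le_sum (fun i _ => mul_nonneg (hs i) (hz i)) (Finset.mem_univ b)
  rw [abs_of_nonneg (mul_nonneg (exp_pos _).le (hz b))]
  calc exp (-∑ i, s i * z i) * z b ≤ exp (-(s b * z b)) * z b := by gcongr; exact hz b
    _ ≤ (s b)⁻¹ := by
      rw [exp_neg, inv_mul_le_iff₀ (exp_pos _), ← div_eq_mul_inv, le_div_iff₀ hsb]
      linarith [add_one_le_exp (s b * z b)]

section Integrability

variable {P : Measure Ω} [IsFiniteMeasure P] {X : Ω → ι → ℝ} {s : ι → ℝ}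

lemma integrable_exp_neg_sum_mul (hX : Measurable X) (hX0 : ∀ ω, 0 ≤ X ω)
    (hs : ∀ i, 0 ≤ s i) : Integrable (fun ω => exp (-∑ i, s i * X ω i)) P :=
  .of_bound (by fun_prop) 1 <| ae_of_all _ fun ω => abs_exp_neg_sum_mul_le_one hs (hX0 ω)

lemma integrable_exp_neg_sum_mul_mul_apply (hX : Measurable X) (hX0 : ∀ ω, 0 ≤ X ω)
    (hs : ∀ i, 0 ≤ s i) {b : ι} (hsb : 0 < s b) :
    Integrable (fun ω => exp (-∑ i, s i * X ω i) * X ω b) P :=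
  .of_bound (by fun_prop) (s b)⁻¹ <| ae_of_all _ fun ω =>
    abs_exp_neg_sum_mul_mul_le_inv hs (hX0 ω) hsb

end Integrability

namespace IsSizeBiasShift

variable {P : Measure Ω} {Y Z : Ω → ι → ℝ} {a : ι} {θ : ℝ} {s : ι → ℝ}

theorem laplace (h : IsSizeBiasShift P Y Z a θ) (hind : IndepFun Y Z P) (hYm : Measurable Y)
    (hZm : Measurable Z) (hY : ∀ ω, 0 ≤ Y ω) (hZ : ∀ ω, 0 ≤ Z ω) (hθ : θ ≠ 0)
    (hs : ∀ i, 0 ≤ s i) :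
    θ * ((∫ ω, exp (-∑ i, s i * Y ω i) ∂P) * ∫ ω, exp (-∑ i, s i * Z ω i) ∂P)
      = ∫ ω, exp (-∑ i, s i * Y ω i) * Y ω a ∂P := by
  have hshift := h.integral_comp_add hY hZ (G := fun x => exp (-∑ i, s i * x i)) (by fun_prop)
    fun x hx => abs_exp_neg_sum_mul_le_one hs hx
  have hsplit : ∀ ω, exp (-∑ i, s i * (Y ω + Z ω) i)
      = exp (-∑ i, s i * Y ω i) * exp (-∑ i, s i * Z ω i) := fun ω => by
    simp only [Pi.add_apply, mul_add, Finset.sum_add_distrib, neg_add, exp_add]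
  simp only [hsplit, mul_div_assoc', integral_div] at hshift
  rw [hind.integral_comp_mul_comp_of_measurable hYm hZm (φ := fun x => exp (-∑ i, s i * x i))
    (ψ := fun x => exp (-∑ i, s i * x i)) (by fun_prop) (by fun_prop)] at hshift
  rw [hshift, mul_div_cancel₀ _ hθ]

theorem laplace_mul_apply [IsFiniteMeasure P] (h : IsSizeBiasShift P Y Z a θ)
    (hind : IndepFun Y Z P) (hYm : Measurable Y) (hZm : Measurable Z) (hY : ∀ ω, 0 ≤ Y ω)
    (hZ : ∀ ω, 0 ≤ Z ω) (hθ : θ ≠ 0) (hs : ∀ i, 0 ≤ s i) {b : ι} (hsb : 0 < s b) :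
    θ * ((∫ ω, exp (-∑ i, s i * Y ω i) * Y ω b ∂P) * (∫ ω, exp (-∑ i, s i * Z ω i) ∂P)
        + (∫ ω, exp (-∑ i, s i * Y ω i) ∂P) * ∫ ω, exp (-∑ i, s i * Z ω i) * Z ω b ∂P)
      = ∫ ω, exp (-∑ i, s i * Y ω i) * Y ω b * Y ω a ∂P := by
  have hshift := h.integral_comp_add hY hZ (G := fun x => exp (-∑ i, s i * x i) * x b)
    (by fun_prop) fun x hx => abs_exp_neg_sum_mul_mul_le_inv hs hx hsb
  have hsplit : ∀ ω, exp (-∑ i, s i * (Y ω + Z ω) i) * (Y ω + Z ω) b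
      = exp (-∑ i, s i * Y ω i) * Y ω b * exp (-∑ i, s i * Z ω i)
        + exp (-∑ i, s i * Y ω i) * (exp (-∑ i, s i * Z ω i) * Z ω b) := fun ω => by
    simp only [Pi.add_apply, mul_add, Finset.sum_add_distrib, neg_add, exp_add]
    ring
  have hint₁ : Integrable (fun ω => exp (-∑ i, s i * Y ω i) * Y ω b * exp (-∑ i, s i * Z ω i)) P :=
    (integrable_exp_neg_sum_mul hZm hZ hs).bdd_mul (by fun_prop)
      (ae_of_all _ fun ω => abs_exp_neg_sum_mul_mul_le_inv hs (hY ω) hsb)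
  have hint₂ : Integrable
      (fun ω => exp (-∑ i, s i * Y ω i) * (exp (-∑ i, s i * Z ω i) * Z ω b)) P :=
    (integrable_exp_neg_sum_mul_mul_apply hZm hZ hs hsb).bdd_mul (by fun_prop)
      (ae_of_all _ fun ω => abs_exp_neg_sum_mul_le_one hs (hY ω))
  simp only [mul_div_assoc', integral_div] at hshift
  rw [integral_congr_ae (ae_of_all _ hsplit), integral_add hint₁ hint₂,
    hind.integral_comp_mul_comp_of_measurable hYm hZm (φ := fun x => exp (-∑ i, s i * x i) * x b)
      (ψ := fun x => exp (-∑ i, s i * x i)) (by fun_prop) (by fun_prop),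
    hind.integral_comp_mul_comp_of_measurable hYm hZm (φ := fun x => exp (-∑ i, s i * x i))
      (ψ := fun x => exp (-∑ i, s i * x i) * x b) (by fun_prop) (by fun_prop)] at hshift
  rw [hshift, mul_div_cancel₀ _ hθ]

end IsSizeBiasShift

end SizeBias

section SizeBiasedLaw

variable {Ω ι : Type*} [MeasurableSpace Ω] [Fintype ι] {P : Measure Ω}

/-- `B ↦ c E[Z_b; Z ∈ B]`, possibly infinite since `Z b` need not be integrable. -/
noncomputable def sizeBiasedLaw (P : Measure Ω) (Z : Ω → ι → ℝ) (c : ℝ) (b : ι) :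
    Measure (ι → ℝ≥0) :=
  (P.withDensity fun ω => ENNReal.ofReal (c * Z ω b)).map fun ω i => (Z ω i).toNNReal

variable {Z : Ω → ι → ℝ} {c : ℝ} {b : ι}

theorem integral_sizeBiasedLaw (hZm : Measurable Z) (hZ : ∀ ω, 0 ≤ Z ω) (hc : 0 ≤ c)
    {F : (ι → ℝ) → ℝ} (hF : Measurable F) :
    ∫ x, F (fun i => x i) ∂sizeBiasedLaw P Z c b = c * ∫ ω, F (Z ω) * Z ω b ∂P := by
  rw [sizeBiasedLaw, integral_map (by fun_prop) (by fun_prop : Measurable _).aestronglyMeasurable,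
    integral_withDensity_eq_integral_toReal_smul (by fun_prop)
      (ae_of_all _ fun _ => ENNReal.ofReal_lt_top), ← integral_const_mul]
  refine integral_congr_ae (ae_of_all _ fun ω => ?_)
  simp only [Real.coe_toNNReal _ (hZ ω _), ENNReal.toReal_ofReal (mul_nonneg hc (hZ ω b)),
    smul_eq_mul]
  ring

theorem lintegral_exp_neg_sizeBiasedLaw [IsFiniteMeasure P] (hZm : Measurable Z)
    (hZ : ∀ ω, 0 ≤ Z ω) (hc : 0 ≤ c) {s : ι → ℝ} (hs : ∀ i, 0 ≤ s i) (hsb : 0 < s b) :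
    ∫⁻ x, ENNReal.ofReal (exp (-∑ i, s i * x i)) ∂sizeBiasedLaw P Z c b
      = ENNReal.ofReal (c * ∫ ω, exp (-∑ i, s i * Z ω i) * Z ω b ∂P) := by
  rw [sizeBiasedLaw, lintegral_map (by fun_prop) (by fun_prop),
    lintegral_withDensity_eq_lintegral_mul _ (by fun_prop) (by fun_prop), ← integral_const_mul,
    ofReal_integral_eq_lintegral_ofReal
      ((integrable_exp_neg_sum_mul_mul_apply hZm hZ hs hsb).const_mul c)
      (ae_of_all _ fun ω => mul_nonneg hc (mul_nonneg (exp_pos _).le (hZ ω b)))]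
  refine lintegral_congr fun ω => ?_
  simp only [Pi.mul_apply, Real.coe_toNNReal _ (hZ ω _),
    ← ENNReal.ofReal_mul (mul_nonneg hc (hZ ω b))]
  ring_nf

end SizeBiasedLaw

section Symmetry

variable {Ω ι : Type*} [MeasurableSpace Ω] [Fintype ι] {P : Measure Ω} [IsProbabilityMeasure P]
  {Y : Ω → ι → ℝ} {Z : ι → Ω → ι → ℝ} {θ : ι → ℝ}
  (hYm : Measurable Y) (hZm : ∀ a, Measurable (Z a)) (hY : ∀ ω, 0 ≤ Y ω)
  (hZ : ∀ a ω, 0 ≤ Z a ω) (hind : ∀ a, IndepFun Y (Z a) P)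
  (hshift : ∀ a, IsSizeBiasShift P Y (Z a) a (θ a))
include hYm hZm hY hZ hind hshift

theorem mul_integral_exp_neg_mul_apply_comm (hθ : ∀ a, θ a ≠ 0) {s : ι → ℝ}
    (hs : ∀ i, 0 < s i) (j k : ι) :
    θ j * ∫ ω, exp (-∑ i, s i * Z j ω i) * Z j ω k ∂P
      = θ k * ∫ ω, exp (-∑ i, s i * Z k ω i) * Z k ω j ∂P := by
  have hs' : ∀ i, 0 ≤ s i := fun i => (hs i).le
  have hL : 0 < ∫ ω, exp (-∑ i, s i * Y ω i) ∂P :=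
    integral_exp_pos (integrable_exp_neg_sum_mul hYm hY hs')
  have hj := (hshift j).laplace (hind j) hYm (hZm j) hY (hZ j) (hθ j) hs'
  have hk := (hshift k).laplace (hind k) hYm (hZm k) hY (hZ k) (hθ k) hs'
  have hjk := (hshift j).laplace_mul_apply (hind j) hYm (hZm j) hY (hZ j) (hθ j) hs' (hs k)
  have hkj := (hshift k).laplace_mul_apply (hind k) hYm (hZm k) hY (hZ k) (hθ k) hs' (hs j)
  have hQ : ∫ ω, exp (-∑ i, s i * Y ω i) * Y ω j * Y ω k ∂P
      = ∫ ω, exp (-∑ i, s i * Y ω i) * Y ω k * Y ω j ∂P :=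
    integral_congr_ae (ae_of_all _ fun ω => mul_right_comm _ _ _)
  refine mul_left_cancel₀ hL.ne' ?_
  linear_combination hjk - hkj - hQ + θ j * (∫ ω, exp (-∑ i, s i * Z j ω i) ∂P) * hk
    - θ k * (∫ ω, exp (-∑ i, s i * Z k ω i) ∂P) * hj

theorem sizeBiasedLaw_comm (hθ : ∀ a, 0 < θ a) (j k : ι) :
    sizeBiasedLaw P (Z j) (θ j) k = sizeBiasedLaw P (Z k) (θ k) j := by
  have hlap : ∀ a b {s : ι → ℝ}, (∀ i, 0 < s i) →
      ∫⁻ x, ENNReal.ofReal (exp (-∑ i, s i * x i)) ∂sizeBiasedLaw P (Z a) (θ a) b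
        = ENNReal.ofReal (θ a * ∫ ω, exp (-∑ i, s i * Z a ω i) * Z a ω b ∂P) := fun a b s hs =>
    lintegral_exp_neg_sizeBiasedLaw (hZm a) (hZ a) (hθ a).le (fun i => (hs i).le) (hs b)
  refine Measure.ext_of_lintegral_exp_neg_eq ?_ fun s hs => ?_
  · simpa using (hlap j k fun _ => one_pos).trans_ne ENNReal.ofReal_ne_top
  · rw [hlap j k hs, hlap k j hs, mul_integral_exp_neg_mul_apply_comm hYm hZm hY hZ hind hshift
      (fun a => (hθ a).ne') hs]

end Symmetry

theorem size_biased_symmetry_identity_general {Ω : Type*} [MeasurableSpace Ω]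
    (P : Measure Ω) [IsProbabilityMeasure P] (n : ℕ)
    (Y : Ω → Fin n → ℝ) (Z : Fin n → Ω → Fin n → ℝ)
    (hYm : Measurable Y) (hZm : ∀ k, Measurable (Z k))
    (hYpos : ∀ ω k, 0 ≤ Y ω k) (hZpos : ∀ k ω i, 0 ≤ Z k ω i)
    (θ : Fin n → ℝ) (hθpos : ∀ k, 0 < θ k)
    (hindep : ∀ k, IndepFun Y (Z k) P)
    (hiso : ∀ k, ∀ F : (Fin n → ℝ) → ℝ, Measurable F → (∃ C, ∀ x, |F x| ≤ C) →
      ∫ ω, F (Y ω + Z k ω) ∂P = ∫ ω, F (Y ω) * (Y ω k / θ k) ∂P) :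
    ∀ j k, ∀ F : (Fin n → ℝ) → ℝ, Measurable F → (∃ C, ∀ x, |F x| ≤ C) →
      θ j * ∫ ω, F (Z j ω) * Z j ω k ∂P = θ k * ∫ ω, F (Z k ω) * Z k ω j ∂P := by
  intro j k F hF _
  rw [← integral_sizeBiasedLaw (hZm j) (hZpos j) (hθpos j).le hF,
    ← integral_sizeBiasedLaw (hZm k) (hZpos k) (hθpos k).le hF,
    sizeBiasedLaw_comm hYm hZm hYpos hZpos hindep hiso hθpos]

/-- Symmetry identity: if the nonnegative random vector `Y` satisfies the isomorphism
property `E[F(Y + Z^k)] = E[F(Y) Y_k/θ_k]` for all `k` (with `Z^k` nonnegative and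
independent of `Y`), then for all `j, k` and bounded measurable `F`,
`θ_j E[F(Z^j) Z^j_k] = θ_k E[F(Z^k) Z^k_j]`. -/
theorem size_biased_symmetry_identity {Ω : Type*} [MeasurableSpace Ω]
    (P : Measure Ω) [IsProbabilityMeasure P] (n : ℕ)
    (Y : Ω → Fin n → ℝ) (Z : Fin n → Ω → Fin n → ℝ)
    (hYm : Measurable Y) (hZm : ∀ k, Measurable (Z k))
    (hYpos : ∀ ω k, 0 ≤ Y ω k) (hZpos : ∀ k ω i, 0 ≤ Z k ω i)
    (θ : Fin n → ℝ) (hθpos : ∀ k, 0 < θ k) (hθfin : ∀ k, ∫ ω, Y ω k ∂P = θ k)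
    (hindep : ∀ k, IndepFun Y (Z k) P)
    (hiso : ∀ k, ∀ F : (Fin n → ℝ) → ℝ, Measurable F → (∃ C, ∀ x, |F x| ≤ C) →
      ∫ ω, F (Y ω + Z k ω) ∂P = ∫ ω, F (Y ω) * (Y ω k / θ k) ∂P) :
    ∀ j k, ∀ F : (Fin n → ℝ) → ℝ, Measurable F → (∃ C, ∀ x, |F x| ≤ C) →
      θ j * ∫ ω, F (Z j ω) * Z j ω k ∂P = θ k * ∫ ω, F (Z k ω) * Z k ω j ∂P :=
  size_biased_symmetry_identity_general P n Y Z hYm hZm hYpos hZpos θ hθpos hindep hiso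
end

section
/- Under the assumptions of the previous symmetry identity (nonnegative random vector Y with the isomorphism property E[F(Y + Z^k)] = E[F(Y) Y_k/θ_k] for all k), it holds for every j, k ≤ n that {Z^j_k > 0} ⊆ {Z^j_j > 0} almost surely. -/
/-!
Testing the size-bias identity against `F(x) = g(x) x_k` for a multiplicative weight `g` and
using the independence of `Y` and `Z^i`, the moment `E[g(Y) Y_i Y_k]`, which is symmetric in
`i, k`, yields `θ_i E[g(Z^i) Z^i_k] = θ_k E[g(Z^k) Z^k_i]`. For `g(x) = exp(-l x_j)` and `i = j`
the right side is at most `θ_k e⁻¹ / l`, while the left side dominates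
`θ_j E[1{Z^j_j = 0} Z^j_k]`; letting `l → ∞` shows `Z^j_k = 0` a.s. on `{Z^j_j = 0}`.
-/

open MeasureTheory ProbabilityTheory Set Filter
open scoped ENNReal Topology

theorem smul_map_eq_map_withDensity {Ω α : Type*} [MeasurableSpace Ω] [MeasurableSpace α]
    {P : Measure Ω} [IsFiniteMeasure P] {X V : Ω → α} (hX : Measurable X) (hV : Measurable V)
    {w : Ω → ℝ} (hw : ∀ ω, 0 ≤ w ω) (hwi : Integrable w P) {c : ℝ} (hc : 0 < c)
    (h : ∀ F : α → ℝ, Measurable F → (∃ C, ∀ x, |F x| ≤ C) →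
      ∫ ω, F (X ω) ∂P = ∫ ω, F (V ω) * (w ω / c) ∂P) :
    ENNReal.ofReal c • P.map X = (P.withDensity fun ω => ENNReal.ofReal (w ω)).map V := by
  ext A hA
  have hind := h (A.indicator 1) (measurable_one.indicator hA)
    ⟨1, fun x => by by_cases hx : x ∈ A <;> simp [hx]⟩
  have hreal : c * P.real (X ⁻¹' A) = ∫ ω in V ⁻¹' A, w ω ∂P := by
    have h1 : ∫ ω, A.indicator 1 (X ω) ∂P = P.real (X ⁻¹' A) := by
      rw [← integral_indicator_one (hX hA)]; rfl
    have h2 : ∫ ω, A.indicator 1 (V ω) * (w ω / c) ∂P = (∫ ω in V ⁻¹' A, w ω ∂P) / c := by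
      rw [← integral_div, ← integral_indicator (hV hA)]
      congr 1; funext ω
      by_cases hω : V ω ∈ A <;> simp [hω, indicator]
    rw [← h1, hind, h2]; field_simp
  rw [Measure.smul_apply, Measure.map_apply hX hA, Measure.map_apply hV hA,
    withDensity_apply _ (hV hA), ← ofReal_integral_eq_lintegral_ofReal hwi.integrableOn
      (ae_of_all _ hw), ← hreal, ENNReal.ofReal_mul hc.le, ofReal_measureReal, smul_eq_mul]

theorem ofReal_mul_lintegral_comp_eq_lintegral_mul {Ω α : Type*} [MeasurableSpace Ω]
    [MeasurableSpace α] {P : Measure Ω} [IsFiniteMeasure P] {X V : Ω → α} (hX : Measurable X)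
    (hV : Measurable V) {w : Ω → ℝ} (hwm : Measurable w) (hw : ∀ ω, 0 ≤ w ω)
    (hwi : Integrable w P) {c : ℝ} (hc : 0 < c)
    (h : ∀ F : α → ℝ, Measurable F → (∃ C, ∀ x, |F x| ≤ C) →
      ∫ ω, F (X ω) ∂P = ∫ ω, F (V ω) * (w ω / c) ∂P)
    {F : α → ℝ≥0∞} (hF : Measurable F) :
    ENNReal.ofReal c * ∫⁻ ω, F (X ω) ∂P = ∫⁻ ω, F (V ω) * ENNReal.ofReal (w ω) ∂P := by
  have := congrArg (fun μ => ∫⁻ x, F x ∂μ) (smul_map_eq_map_withDensity hX hV hw hwi hc h)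
  simp only [lintegral_smul_measure, lintegral_map hF hX, lintegral_map hF hV, smul_eq_mul] at this
  rw [this]
  exact (lintegral_withDensity_eq_lintegral_mul _ hwm.ennreal_ofReal (hF.comp hV)).trans
    (lintegral_congr fun ω => mul_comm _ _)

section SizeBias

variable {Ω : Type*} [MeasurableSpace Ω] {P : Measure Ω} {n : ℕ} {Y : Ω → Fin n → ℝ}
  {Z : Fin n → Ω → Fin n → ℝ} {θ : Fin n → ℝ}

theorem ofReal_mul_lintegral_mul_coord_comm (hYm : Measurable Y) (hZm : ∀ k, Measurable (Z k))
    (hYpos : ∀ ω k, 0 ≤ Y ω k) (hZpos : ∀ k ω i, 0 ≤ Z k ω i)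
    (hindep : ∀ k, IndepFun Y (Z k) P)
    (hsb : ∀ k (F : (Fin n → ℝ) → ℝ≥0∞), Measurable F →
      ENNReal.ofReal (θ k) * ∫⁻ ω, F (Y ω + Z k ω) ∂P = ∫⁻ ω, F (Y ω) * ENNReal.ofReal (Y ω k) ∂P)
    {g : (Fin n → ℝ) → ℝ≥0∞} (hg : Measurable g) (hmul : ∀ x y, g (x + y) = g x * g y)
    (hgY₀ : ∫⁻ ω, g (Y ω) ∂P ≠ 0) (hgY : ∫⁻ ω, g (Y ω) ∂P ≠ ∞)
    (hgZ : ∀ k, ∫⁻ ω, g (Z k ω) ∂P ≠ ∞) (i k : Fin n) :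
    ENNReal.ofReal (θ i) * ∫⁻ ω, g (Z i ω) * ENNReal.ofReal (Z i ω k) ∂P
      = ENNReal.ofReal (θ k) * ∫⁻ ω, g (Z k ω) * ENNReal.ofReal (Z k ω i) ∂P := by
  set a := ∫⁻ ω, g (Y ω) ∂P
  set b := fun k => ∫⁻ ω, g (Z k ω) ∂P
  have hcoord : ∀ i, Measurable fun x : Fin n → ℝ => ENNReal.ofReal (x i) :=
    fun i => (measurable_pi_apply i).ennreal_ofReal
  have hfactor : ∀ k {φ ψ : (Fin n → ℝ) → ℝ≥0∞}, Measurable φ → Measurable ψ →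
      ∫⁻ ω, φ (Y ω) * ψ (Z k ω) ∂P = (∫⁻ ω, φ (Y ω) ∂P) * ∫⁻ ω, ψ (Z k ω) ∂P :=
    fun k φ ψ hφ hψ => lintegral_mul_eq_lintegral_mul_lintegral_of_indepFun''
      (hφ.comp hYm).aemeasurable (hψ.comp (hZm k)).aemeasurable ((hindep k).comp hφ hψ)
  have hbiased : ∀ i, ∫⁻ ω, g (Y ω) * ENNReal.ofReal (Y ω i) ∂P
      = ENNReal.ofReal (θ i) * (a * b i) := fun i => by
    rw [← hsb i g hg]
    simp only [hmul]
    rw [hfactor i hg hg]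
  -- The moment `E[g(Y) Y_i Y_k]`, symmetric in `i` and `k`, expanded along `Y + Z^i`.
  have hmoment : ∀ i k, ENNReal.ofReal (θ i) *
      ((ENNReal.ofReal (θ k) * (a * b k)) * b i
        + a * ∫⁻ ω, g (Z i ω) * ENNReal.ofReal (Z i ω k) ∂P)
      = ∫⁻ ω, g (Y ω) * ENNReal.ofReal (Y ω k) * ENNReal.ofReal (Y ω i) ∂P := fun i k => by
    have hgk : Measurable fun x => g x * ENNReal.ofReal (x k) := hg.mul (hcoord k)
    calc _ = ENNReal.ofReal (θ i) * ((∫⁻ ω, g (Y ω) * ENNReal.ofReal (Y ω k) ∂P) * b i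
          + a * ∫⁻ ω, g (Z i ω) * ENNReal.ofReal (Z i ω k) ∂P) := by rw [hbiased k]
      _ = ENNReal.ofReal (θ i) * ∫⁻ ω, g (Y ω + Z i ω) * ENNReal.ofReal ((Y ω + Z i ω) k) ∂P := by
        rw [← hfactor i hgk hg, ← hfactor i hg hgk,
          ← lintegral_add_left (f := fun ω => g (Y ω) * ENNReal.ofReal (Y ω k) * g (Z i ω))
            ((hgk.comp hYm).mul (hg.comp (hZm i)))]
        refine congrArg _ (lintegral_congr fun ω => ?_)
        rw [hmul, Pi.add_apply, ENNReal.ofReal_add (hYpos ω k) (hZpos i ω k)]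
        ring
      _ = _ := hsb i _ hgk
  have hsum := (hmoment i k).trans ((lintegral_congr fun ω => mul_right_comm _ _ _).trans
    (hmoment k i).symm)
  have hfin : ENNReal.ofReal (θ i) * ((ENNReal.ofReal (θ k) * (a * b k)) * b i) ≠ ∞ := by
    have := hgZ i; have := hgZ k; finiteness
  rw [mul_add, mul_add, show ENNReal.ofReal (θ k) * ((ENNReal.ofReal (θ i) * (a * b i)) * b k)
    = ENNReal.ofReal (θ i) * ((ENNReal.ofReal (θ k) * (a * b k)) * b i) by ring,
    ENNReal.add_right_inj hfin, mul_left_comm, mul_left_comm (ENNReal.ofReal (θ k))] at hsum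
  exact (ENNReal.mul_right_inj hgY₀ hgY).mp hsum

theorem setLIntegral_ofReal_coord_eq_zero [IsProbabilityMeasure P] (hYm : Measurable Y)
    (hZm : ∀ k, Measurable (Z k)) (hYpos : ∀ ω k, 0 ≤ Y ω k) (hZpos : ∀ k ω i, 0 ≤ Z k ω i)
    (hindep : ∀ k, IndepFun Y (Z k) P)
    (hsb : ∀ k (F : (Fin n → ℝ) → ℝ≥0∞), Measurable F →
      ENNReal.ofReal (θ k) * ∫⁻ ω, F (Y ω + Z k ω) ∂P = ∫⁻ ω, F (Y ω) * ENNReal.ofReal (Y ω k) ∂P)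
    {j : Fin n} (hθ : 0 < θ j) (k : Fin n) :
    ∫⁻ ω in {ω | Z j ω j = 0}, ENNReal.ofReal (Z j ω k) ∂P = 0 := by
  set S := ∫⁻ ω in {ω | Z j ω j = 0}, ENNReal.ofReal (Z j ω k) ∂P
  have hbound : ∀ l : ℝ, 0 < l →
      ENNReal.ofReal (θ j) * S ≤ ENNReal.ofReal (θ k) * ENNReal.ofReal (Real.exp (-1) / l) := by
    intro l hl
    set g : (Fin n → ℝ) → ℝ≥0∞ := fun x => ENNReal.ofReal (Real.exp (-(l * x j)))
    have hg : Measurable g := by fun_prop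
    have hmul : ∀ x y, g (x + y) = g x * g y := fun x y => by
      simp only [g, Pi.add_apply, mul_add, neg_add, Real.exp_add,
        ENNReal.ofReal_mul (Real.exp_pos _).le]
    have hfin : ∀ V : Ω → Fin n → ℝ, (∀ ω, 0 ≤ V ω j) → ∫⁻ ω, g (V ω) ∂P ≠ ∞ := by
      intro V hV
      refine ne_top_of_le_ne_top ENNReal.one_ne_top ?_
      calc ∫⁻ ω, g (V ω) ∂P ≤ ∫⁻ _, 1 ∂P := lintegral_mono fun ω =>
            ENNReal.ofReal_le_one.mpr (Real.exp_le_one_iff.mpr (by nlinarith [hV ω]))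
        _ = 1 := by simp
    have hpos : ∫⁻ ω, g (Y ω) ∂P ≠ 0 := by
      refine ((lintegral_pos_iff_support (hg.comp hYm)).mpr ?_).ne'
      simp [g, Function.support, Real.exp_pos]
    calc ENNReal.ofReal (θ j) * S
        ≤ ENNReal.ofReal (θ j) * ∫⁻ ω, g (Z j ω) * ENNReal.ofReal (Z j ω k) ∂P := by
          gcongr
          calc S = ∫⁻ ω in {ω | Z j ω j = 0}, g (Z j ω) * ENNReal.ofReal (Z j ω k) ∂P :=
                setLIntegral_congr_fun ((measurable_pi_apply j).comp (hZm j)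
                  (measurableSet_singleton 0)) fun ω hω => by simp [g, show Z j ω j = 0 from hω]
            _ ≤ _ := setLIntegral_le_lintegral _ _
      _ = ENNReal.ofReal (θ k) * ∫⁻ ω, g (Z k ω) * ENNReal.ofReal (Z k ω j) ∂P :=
          ofReal_mul_lintegral_mul_coord_comm hYm hZm hYpos hZpos hindep hsb hg hmul hpos
            (hfin Y fun ω => hYpos ω j) (fun m => hfin (Z m) fun ω => hZpos m ω j) j k
      _ ≤ ENNReal.ofReal (θ k) * ENNReal.ofReal (Real.exp (-1) / l) := by
          gcongr
          calc ∫⁻ ω, g (Z k ω) * ENNReal.ofReal (Z k ω j) ∂P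
              ≤ ∫⁻ _, ENNReal.ofReal (Real.exp (-1) / l) ∂P := lintegral_mono fun ω => by
                rw [← ENNReal.ofReal_mul (Real.exp_pos _).le]
                refine ENNReal.ofReal_le_ofReal ((le_div_iff₀ hl).mpr ?_)
                calc Real.exp (-(l * Z k ω j)) * Z k ω j * l
                    = l * Z k ω j * Real.exp (-(l * Z k ω j)) := by ring
                  _ ≤ Real.exp (-1) := Real.mul_exp_neg_le_exp_neg_one _
            _ = ENNReal.ofReal (Real.exp (-1) / l) := by simp
  have hlim : Tendsto (fun l : ℝ => ENNReal.ofReal (θ k) * ENNReal.ofReal (Real.exp (-1) / l))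
      atTop (𝓝 0) := by
    simpa using ENNReal.Tendsto.const_mul (ENNReal.tendsto_ofReal
      (tendsto_const_nhds.div_atTop tendsto_id)) (Or.inr ENNReal.ofReal_ne_top)
  have := ge_of_tendsto hlim ((eventually_gt_atTop 0).mono hbound)
  exact (mul_eq_zero.mp (le_zero_iff.mp this)).resolve_left (ENNReal.ofReal_pos.mpr hθ).ne'

end SizeBias

/-- Under the isomorphism property `E[F(Y + Z^k)] = E[F(Y) Y_k/θ_k]` for the nonnegative
random vector `Y`, one has `{Z^j_k > 0} ⊆ {Z^j_j > 0}` almost surely, for all `j, k`. -/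
theorem size_biased_support_inclusion {Ω : Type*} [MeasurableSpace Ω]
    (P : Measure Ω) [IsProbabilityMeasure P] (n : ℕ)
    (Y : Ω → Fin n → ℝ) (Z : Fin n → Ω → Fin n → ℝ)
    (hYm : Measurable Y) (hZm : ∀ k, Measurable (Z k))
    (hYpos : ∀ ω k, 0 ≤ Y ω k) (hZpos : ∀ k ω i, 0 ≤ Z k ω i)
    (θ : Fin n → ℝ) (hθpos : ∀ k, 0 < θ k) (hθfin : ∀ k, ∫ ω, Y ω k ∂P = θ k)
    (hindep : ∀ k, IndepFun Y (Z k) P)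
    (hiso : ∀ k, ∀ F : (Fin n → ℝ) → ℝ, Measurable F → (∃ C, ∀ x, |F x| ≤ C) →
      ∫ ω, F (Y ω + Z k ω) ∂P = ∫ ω, F (Y ω) * (Y ω k / θ k) ∂P) :
    ∀ j k, ∀ᵐ ω ∂P, 0 < Z j ω k → 0 < Z j ω j := by
  intro j k
  have hYint : ∀ k, Integrable (fun ω => Y ω k) P := fun k =>
    Integrable.of_integral_ne_zero ((hθfin k).trans_ne (hθpos k).ne')
  have hsb : ∀ k (F : (Fin n → ℝ) → ℝ≥0∞), Measurable F →
      ENNReal.ofReal (θ k) * ∫⁻ ω, F (Y ω + Z k ω) ∂P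
        = ∫⁻ ω, F (Y ω) * ENNReal.ofReal (Y ω k) ∂P := fun k _ hF =>
    ofReal_mul_lintegral_comp_eq_lintegral_mul (hYm.add (hZm k)) hYm
      ((measurable_pi_apply k).comp hYm) (fun ω => hYpos ω k) (hYint k) (hθpos k) (hiso k) hF
  have hzero := setLIntegral_ofReal_coord_eq_zero hYm hZm hYpos hZpos hindep hsb (hθpos j) k
  have hset : MeasurableSet {ω | Z j ω j = 0} :=
    (measurable_pi_apply j).comp (hZm j) (measurableSet_singleton 0)
  filter_upwards [(setLIntegral_eq_zero_iff hset
    ((measurable_pi_apply k).comp (hZm j)).ennreal_ofReal).mp hzero] with ω hω hk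
  refine (hZpos j ω j).lt_of_ne fun hj => ?_
  exact (ENNReal.ofReal_eq_zero.mp (hω hj.symm)).not_gt hk
end

section
/- Let X = (X_t)_{t∈T} be a stochastic process and U ⊆ R^T a set such that (U, B^T ∩ U) is a standard Borel space. Then there exists a process X̃ with all sample paths in U such that X̃_t = X_t a.s. for every t ∈ T if and only if P(X ∈ A) = 0 for every A ∈ B^T with A ⊆ R^T \ U. -/
open MeasureTheory Set
open scoped ENNReal

/-- Every measurable set in a product σ-algebra depends on countably many coordinates. -/
lemma exists_countable_dependsOn {T : Type*} {A : Set (T → ℝ)} (hA : MeasurableSet A) :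
    ∃ S : Set T, S.Countable ∧ ∀ x y : T → ℝ, (∀ t ∈ S, x t = y t) → (x ∈ A ↔ y ∈ A) := by
  let m' : MeasurableSpace (T → ℝ) :=
  { MeasurableSet' := fun A =>
      ∃ S : Set T, S.Countable ∧ ∀ x y : T → ℝ, (∀ t ∈ S, x t = y t) → (x ∈ A ↔ y ∈ A)
    measurableSet_empty := ⟨∅, countable_empty, by simp⟩
    measurableSet_compl := fun B ⟨S, hS, h⟩ =>
      ⟨S, hS, fun x y hxy => by simp only [mem_compl_iff, h x y hxy]⟩
    measurableSet_iUnion := fun f hf => by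
      choose S hS h using hf
      refine ⟨⋃ n, S n, countable_iUnion hS, fun x y hxy => ?_⟩
      simp only [mem_iUnion]
      exact exists_congr fun n => h n x y fun t ht => hxy t (mem_iUnion.2 ⟨n, ht⟩) }
  have hle : (MeasurableSpace.pi : MeasurableSpace (T → ℝ)) ≤ m' := by
    refine iSup_le fun t => ?_
    intro s hs
    rw [MeasurableSpace.measurableSet_comap] at hs
    obtain ⟨B, _, rfl⟩ := hs
    exact ⟨{t}, countable_singleton t, fun x y hxy => by
      simp only [mem_preimage, hxy t rfl]⟩
  exact hle A hA

/-- A process `X` admits a modification `X̃` with all sample paths in `U` (where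
`(U, B^T ∩ U)` is a standard Borel space) if and only if `P(X ∈ A) = 0` for every
measurable `A ⊆ ℝ^T \ U`. -/
theorem exists_modification_paths_in_iff {T Ω : Type*} [MeasurableSpace Ω]
    (P : Measure Ω) [IsProbabilityMeasure P]
    (X : Ω → T → ℝ) (hX : Measurable X)
    (U : Set (T → ℝ)) [StandardBorelSpace U] :
    (∃ X' : Ω → T → ℝ, (∀ ω, X' ω ∈ U) ∧ (∀ t, Measurable fun ω => X' ω t) ∧
        ∀ t, ∀ᵐ ω ∂P, X' ω t = X ω t) ↔
      ∀ A : Set (T → ℝ), MeasurableSet A → A ⊆ Uᶜ → P (X ⁻¹' A) = 0 := by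
  constructor
  · rintro ⟨X', hU, _, hmod⟩ A hA hAU
    obtain ⟨S, hSc, hdep⟩ := exists_countable_dependsOn hA
    have hae : ∀ᵐ ω ∂P, ∀ t ∈ S, X' ω t = X ω t := by
      have := hSc.to_subtype
      rw [ae_ball_iff hSc]
      exact fun t _ => hmod t
    have hsub : X ⁻¹' A ⊆ {ω | ¬ ∀ t ∈ S, X' ω t = X ω t} := by
      intro ω hω h
      exact hAU ((hdep (X ω) (X' ω) fun t ht => (h t ht).symm).1 hω) (hU ω)
    exact measure_mono_null hsub (ae_iff.1 hae)
  · intro h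
    -- U is nonempty
    have hUne : U.Nonempty := by
      rcases U.eq_empty_or_nonempty with hE | hne
      · exfalso
        have := h univ MeasurableSet.univ (by simp [hE])
        simp at this
      · exact hne
    -- get a countable separating family for U, pull back to a countable coordinate set S
    obtain ⟨F, hFc, hFm, hFsep⟩ :=
      exists_countable_separating U MeasurableSet univ
    have key : ∀ s ∈ F, ∃ S : Set T, S.Countable ∧
        ∀ x y : T → ℝ, (∀ t ∈ S, x t = y t) →
          (∀ (hx : x ∈ U) (hy : y ∈ U), (⟨x, hx⟩ : U) ∈ s ↔ (⟨y, hy⟩ : U) ∈ s) := by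
      intro s hs
      have hms := hFm s hs
      rw [MeasurableSpace.measurableSet_comap] at hms
      obtain ⟨B, hB, hBs⟩ := hms
      obtain ⟨S, hSc, hdep⟩ := exists_countable_dependsOn hB
      refine ⟨S, hSc, fun x y hxy hx hy => ?_⟩
      rw [← hBs]
      exact hdep x y hxy
    choose Sf hSfc hSf using key
    set S : Set T := ⋃ (s : Set U) (hs : s ∈ F), Sf s hs with hSdef
    have hSc : S.Countable := hFc.biUnion hSfc
    have := hSc.to_subtype
    -- the restriction map to coordinates in S, injective on U
    let π : (T → ℝ) → (S → ℝ) := fun x t => x t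
    have hπ : Measurable π := measurable_pi_lambda _ fun t => measurable_pi_apply _
    let e : U → (S → ℝ) := fun u => π u.1
    have he : Measurable e := hπ.comp measurable_subtype_coe
    have hinj : Function.Injective e := by
      intro u v huv
      have : ∀ t ∈ S, (u : T → ℝ) t = (v : T → ℝ) t := fun t ht =>
        congrFun huv ⟨t, ht⟩
      refine Subtype.ext ?_
      have := hFsep u (mem_univ _) v (mem_univ _) fun s hs =>
        (Subtype.coe_eta u u.2 ▸ Subtype.coe_eta v v.2 ▸
          hSf s hs u.1 v.1 (fun t ht => this t (mem_iUnion₂.2 ⟨s, hs, ht⟩)) u.2 v.2)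
      exact congrArg Subtype.val this
    have hemb : MeasurableEmbedding e := he.measurableEmbedding hinj
    have : Nonempty U := hUne.to_subtype
    obtain ⟨g, hg, hge⟩ := hemb.exists_measurable_extend measurable_id fun _ => this
    -- define the modification
    refine ⟨fun ω => (g (π (X ω)) : T → ℝ), fun ω => (g (π (X ω))).2, fun t => ?_, fun t => ?_⟩
    · exact (measurable_pi_apply t).comp (measurable_subtype_coe.comp (hg.comp (hπ.comp hX)))
    · set A : Set (T → ℝ) := {x | (g (π x) : T → ℝ) t ≠ x t} with hAdef
      have hAm : MeasurableSet A := by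
        have h1 : Measurable fun x : T → ℝ => (g (π x) : T → ℝ) t :=
          (measurable_pi_apply t).comp (measurable_subtype_coe.comp (hg.comp hπ))
        exact (measurableSet_eq_fun h1 (measurable_pi_apply t)).compl
      have hAU : A ⊆ Uᶜ := by
        intro x hx hxU
        apply hx
        have : g (π x) = ⟨x, hxU⟩ := congrFun hge (⟨x, hxU⟩ : U)
        rw [this]
      have := h A hAm hAU
      rw [ae_iff]
      exact this
end

section
/- Let V = (V_t)_{t∈T} be a representation of a Lévy measure ν on a measure space (S, S, n) (i.e., n(V_I ∈ B) = ν_I(B) for every finite I ⊆ T and every Borel B ⊆ R^I with 0_I ∉ B), and suppose there exists a strictly positive f with ∫_S f dn < ∞. Then there exists a countable T_0 ⊆ T such that the restriction of V to S_0 := {s ∈ S : V_{T_0}(s) ≠ 0} is an exact representation of ν, i.e., the pushforward of n restricted to S_0 under V equals ν. -/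
open MeasureTheory Set
open scoped ENNReal

theorem MeasurableSet.exists_countable_dependsOn {ι : Type*} {α : ι → Type*}
    [∀ i, MeasurableSpace (α i)] {D : Set (∀ i, α i)} (hD : MeasurableSet D) :
    ∃ J : Set ι, J.Countable ∧ DependsOn (· ∈ D) J := by
  let M : MeasurableSpace (∀ i, α i) :=
    { MeasurableSet' := fun D => ∃ J : Set ι, J.Countable ∧ DependsOn (· ∈ D) J
      measurableSet_empty := ⟨∅, countable_empty, dependsOn_const False⟩
      measurableSet_compl := fun _ ⟨J, hJ, hD⟩ =>
        ⟨J, hJ, fun _ _ h => congrArg Not (hD h)⟩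
      measurableSet_iUnion := fun s hs => by
        choose J hJ hs using hs
        refine ⟨⋃ i, J i, countable_iUnion hJ, fun x y h => ?_⟩
        simp only [mem_iUnion]
        exact propext <| exists_congr fun i =>
          (hs i fun t ht => h t (mem_iUnion.2 ⟨i, ht⟩)).to_iff }
  suffices MeasurableSpace.pi ≤ M from this D hD
  rw [← generateFrom_measurableCylinders]
  refine MeasurableSpace.generateFrom_le fun C hC => ?_
  obtain ⟨I, B, -, rfl⟩ := (mem_measurableCylinders C).mp hC
  exact ⟨I, I.countable_toSet, fun x y h => by
    simp only [mem_cylinder, show I.restrict x = I.restrict y from funext fun i => h i i.2]⟩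

theorem exists_countable_measure_diff_biUnion_eq_zero {α ι : Type*} [MeasurableSpace α]
    (μ : Measure α) [IsFiniteMeasure μ] {N : ι → Set α} (hN : ∀ i, MeasurableSet (N i)) :
    ∃ J : Set ι, J.Countable ∧ ∀ i, μ (N i \ ⋃ j ∈ J, N j) = 0 := by
  set g : Set ι → ℝ≥0∞ := fun J => μ (⋃ j ∈ J, N j)
  have hg : Monotone g := fun J K hJK => measure_mono (biUnion_subset_biUnion_left hJK)
  obtain ⟨u, -, hu, hmem⟩ := exists_seq_tendsto_sSup (S := g '' {J | J.Countable})
    ⟨g ∅, ∅, countable_empty, rfl⟩ (OrderTop.bddAbove _)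
  choose J hJ hJu using hmem
  have hJmax : ∀ K : Set ι, K.Countable → g K ≤ g (⋃ m, J m) := fun K hK =>
    (le_sSup (mem_image_of_mem g hK)).trans <| le_of_tendsto' hu fun m =>
      (hJu m).symm.le.trans (hg (subset_iUnion J m))
  refine ⟨⋃ m, J m, countable_iUnion hJ, fun i => ?_⟩
  have hmax := hJmax _ ((countable_iUnion hJ).insert i)
  rw [← union_sdiff_right, measure_sdiff subset_union_right
    (MeasurableSet.biUnion (countable_iUnion hJ) fun j _ => hN j).nullMeasurableSet
    (measure_ne_top _ _)]
  simp only [g, biUnion_insert] at hmax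
  exact tsub_eq_zero_of_le hmax

theorem measure_le_abs_lt_top {α : Type*} [MeasurableSpace α] {ν : Measure α} {g : α → ℝ}
    (hg : Measurable g) (hint : ∫⁻ x, ENNReal.ofReal (min (g x ^ 2) 1) ∂ν < ⊤) {ε : ℝ}
    (hε : 0 < ε) : ν {x | ε ≤ |g x|} < ⊤ := by
  have hc : ENNReal.ofReal (min (ε ^ 2) 1) ≠ 0 :=
    (ENNReal.ofReal_pos.2 (lt_min (pow_pos hε 2) one_pos)).ne'
  have hsub : {x | ε ≤ |g x|} ⊆
      {x | ENNReal.ofReal (min (ε ^ 2) 1) ≤ ENNReal.ofReal (min (g x ^ 2) 1)} := fun x hx => by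
    have : ε ^ 2 ≤ g x ^ 2 := by simpa only [sq_abs] using pow_le_pow_left₀ hε.le hx 2
    exact ENNReal.ofReal_le_ofReal (min_le_min_right 1 this)
  exact (measure_mono hsub).trans_lt <|
    (meas_ge_le_lintegral_div (Measurable.aemeasurable (by fun_prop)) hc
      ENNReal.ofReal_ne_top).trans_lt (ENNReal.div_lt_top hint.ne hc)

section SupportMeets

variable {T : Type*}

def supportMeets (J : Set T) : Set (T → ℝ) := {x | ∃ t ∈ J, x t ≠ 0}

theorem supportMeets_eq_biUnion (J : Set T) : supportMeets J = ⋃ t ∈ J, {x | x t ≠ 0} := by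
  ext; simp [supportMeets]

theorem measurableSet_supportMeets {J : Set T} (hJ : J.Countable) :
    MeasurableSet (supportMeets J) := by
  rw [supportMeets_eq_biUnion]
  exact .biUnion hJ fun t _ => (measurableSet_singleton 0).compl.preimage (measurable_pi_apply t)

theorem subset_supportMeets_of_dependsOn {D : Set (T → ℝ)} {J : Set T}
    (hD : DependsOn (· ∈ D) J) (h0 : 0 ∉ D) : D ⊆ supportMeets J := by
  intro x hx
  by_contra hxJ
  -- `x` vanishes on `J`, so it cannot be told apart from `0` by a set depending only on `J`
  refine h0 ((hD fun t ht => ?_).mp hx)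
  by_contra hne
  exact hxJ ⟨t, ht, hne⟩

end SupportMeets

def IsRepresentation {T S : Type*} [MeasurableSpace S] (n : Measure S) (ν : Measure (T → ℝ))
    (V : S → T → ℝ) : Prop :=
  ∀ I : Finset T, I.Nonempty → ∀ B : Set (I → ℝ), MeasurableSet B → 0 ∉ B →
    n (V ⁻¹' cylinder I B) = ν (cylinder I B)

namespace IsRepresentation

variable {T S : Type*} [MeasurableSpace S] {n : Measure S} {ν : Measure (T → ℝ)} {V : S → T → ℝ}

theorem map_restrict_abs_apply_ge (hrep : IsRepresentation n ν V) (hV : Measurable V) {t : T}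
    {ε : ℝ} (hε : 0 < ε) (hfin : ν {x | ε ≤ |x t|} ≠ ⊤) :
    (n.map V).restrict {x | ε ≤ |x t|} = ν.restrict {x | ε ≤ |x t|} := by
  classical
  set W := {x : T → ℝ | ε ≤ |x t|}
  have hW : MeasurableSet W := measurableSet_le measurable_const (measurable_pi_apply t).abs
  have hcyl : ∀ (I : Finset T) (B : Set (I → ℝ)), MeasurableSet B →
      (n.map V).restrict W (cylinder I B) = ν.restrict W (cylinder I B) := by
    intro I B hB
    let B' : Set (↥(insert t I) → ℝ) :=
      Finset.restrict₂ (π := fun _ => ℝ) (I.subset_insert t) ⁻¹' B ∩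
        {y | ε ≤ |y ⟨t, I.mem_insert_self t⟩|}
    have hB' : MeasurableSet B' := (Finset.measurable_restrict₂ _ hB).inter <|
      measurableSet_le measurable_const (measurable_pi_apply _).abs
    have h0 : 0 ∉ B' := fun h => by simpa using hε.trans_le h.2
    have hcyl' : cylinder I B ∩ W = cylinder (insert t I) B' := rfl
    rw [Measure.restrict_apply hB.cylinder, Measure.restrict_apply hB.cylinder,
      Measure.map_apply hV (hB.cylinder.inter hW), hcyl']
    exact hrep _ (Finset.insert_nonempty t I) B' hB' h0
  have hW_eq : (n.map V).restrict W univ = ν.restrict W univ := by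
    simpa only [cylinder_univ] using hcyl ∅ univ MeasurableSet.univ
  have : IsFiniteMeasure ((n.map V).restrict W) :=
    ⟨by rw [hW_eq, Measure.restrict_apply_univ]; exact hfin.lt_top⟩
  refine ext_of_generate_finite _ generateFrom_measurableCylinders.symm
    isPiSystem_measurableCylinders (fun C hC => ?_) hW_eq
  obtain ⟨I, B, hB, rfl⟩ := (mem_measurableCylinders C).mp hC
  exact hcyl I B hB

theorem map_restrict_apply_ne_zero (hrep : IsRepresentation n ν V) (hV : Measurable V) {t : T}
    (ht : ∫⁻ x, ENNReal.ofReal (min (x t ^ 2) 1) ∂ν < ⊤) :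
    (n.map V).restrict {x | x t ≠ 0} = ν.restrict {x | x t ≠ 0} := by
  have hcover : {x : T → ℝ | x t ≠ 0} = ⋃ k : ℕ, {x | 1 / ((k : ℝ) + 1) ≤ |x t|} := by
    ext x
    simp only [mem_ofPred_eq, mem_iUnion]
    refine ⟨fun hx => ?_, fun ⟨k, hk⟩ hx => ?_⟩
    · obtain ⟨k, hk⟩ := exists_nat_one_div_lt (abs_pos.2 hx)
      exact ⟨k, hk.le⟩
    · rw [hx, abs_zero] at hk
      exact hk.not_gt Nat.one_div_pos_of_nat
  rw [hcover, Measure.restrict_iUnion_congr]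
  exact fun k => hrep.map_restrict_abs_apply_ge hV Nat.one_div_pos_of_nat
    (measure_le_abs_lt_top (measurable_pi_apply t) ht Nat.one_div_pos_of_nat).ne

theorem map_restrict_supportMeets (hrep : IsRepresentation n ν V) (hV : Measurable V)
    (hL1 : ∀ t, ∫⁻ x, ENNReal.ofReal (min (x t ^ 2) 1) ∂ν < ⊤) {J : Set T} (hJ : J.Countable) :
    (n.map V).restrict (supportMeets J) = ν.restrict (supportMeets J) := by
  rw [supportMeets_eq_biUnion, Measure.restrict_biUnion_congr hJ]
  exact fun t _ => hrep.map_restrict_apply_ne_zero hV (hL1 t)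

theorem measure_preimage (hrep : IsRepresentation n ν V) (hV : Measurable V)
    (hL1 : ∀ t, ∫⁻ x, ENNReal.ofReal (min (x t ^ 2) 1) ∂ν < ⊤) {D : Set (T → ℝ)}
    (hD : MeasurableSet D) (h0 : 0 ∉ D) : n (V ⁻¹' D) = ν D := by
  obtain ⟨J, hJ, hDJ⟩ := hD.exists_countable_dependsOn
  have hDsub := subset_supportMeets_of_dependsOn hDJ h0
  calc n (V ⁻¹' D) = (n.map V).restrict (supportMeets J) D := by
        rw [Measure.restrict_eq_self _ hDsub, Measure.map_apply hV hD]
    _ = ν D := by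
        rw [hrep.map_restrict_supportMeets hV hL1 hJ, Measure.restrict_eq_self _ hDsub]

theorem measure_compl_supportMeets_eq_zero (hrep : IsRepresentation n ν V) (hV : Measurable V)
    (hL1 : ∀ t, ∫⁻ x, ENNReal.ofReal (min (x t ^ 2) 1) ∂ν < ⊤)
    (hL2 : ∀ A : Set (T → ℝ), MeasurableSet A → ν A = innerMeasure ν (A \ {0}))
    {T0 : Set T} (hT0 : T0.Countable)
    (hnull : ∀ t, n ({s | V s t ≠ 0} \ V ⁻¹' supportMeets T0) = 0) :
    ν (supportMeets T0)ᶜ = 0 := by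
  rw [hL2 _ (measurableSet_supportMeets hT0).compl, innerMeasure]
  simp only [ENNReal.iSup_eq_zero]
  intro D hD hDsub
  have h0 : (0 : T → ℝ) ∉ D := fun h => (hDsub h).2 rfl
  obtain ⟨J, hJ, hDJ⟩ := hD.exists_countable_dependsOn
  rw [← hrep.measure_preimage hV hL1 hD h0]
  refine measure_mono_null (fun s hs => ?_) ((measure_biUnion_null_iff hJ).2 fun t _ => hnull t)
  obtain ⟨t, ht, hst⟩ := subset_supportMeets_of_dependsOn hDJ h0 hs
  exact mem_biUnion ht ⟨hst, (hDsub hs).1⟩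

end IsRepresentation

/-- Any representation `V` of a Lévy measure `ν` on a σ-finite measure space `(S, 𝒮, n)`
can be made exact by restricting it to `S₀ = {s : V_{T₀}(s) ≠ 0}` for a suitable
countable `T₀ ⊆ T`: the pushforward of `n` restricted to `S₀` under `V` equals `ν`. -/
theorem representation_restrict_exact {T S : Type*} [MeasurableSpace S]
    (n : Measure S) (ν : Measure (T → ℝ))
    (hL1 : ∀ t : T, ∫⁻ x : T → ℝ, ENNReal.ofReal (min ((x t) ^ 2) 1) ∂ν < ⊤)
    (hL2 : ∀ A : Set (T → ℝ), MeasurableSet A → ν A = innerMeasure ν (A \ {0}))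
    (V : S → T → ℝ) (hVm : ∀ t, Measurable fun s => V s t)
    (hrep : ∀ I : Finset T, I.Nonempty → ∀ B : Set ({t // t ∈ I} → ℝ), MeasurableSet B →
      (fun _ => (0 : ℝ)) ∉ B →
      n ((fun s (i : {t // t ∈ I}) => V s i.1) ⁻¹' B) = ν ((fun x (i : {t // t ∈ I}) => x i.1) ⁻¹' B))
    (f : S → ℝ) (hfm : Measurable f) (hfpos : ∀ s, 0 < f s)
    (hfint : ∫⁻ s, ENNReal.ofReal (f s) ∂n < ⊤) :
    ∃ T0 : Set T, T0.Countable ∧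
      Measure.map V (n.restrict {s | ∃ t ∈ T0, V s t ≠ 0}) = ν := by
  have hrep : IsRepresentation n ν V := hrep
  have hV : Measurable V := measurable_pi_lambda _ hVm
  -- the exhaustion is run in the finite measure `f • n`, which has the same null sets as `n`
  have hfinite := isFiniteMeasure_withDensity hfint.ne
  have hn_ac : n ≪ n.withDensity fun s => ENNReal.ofReal (f s) :=
    withDensity_absolutelyContinuous' hfm.ennreal_ofReal.aemeasurable
      (ae_of_all _ fun s => (ENNReal.ofReal_pos.2 (hfpos s)).ne')
  obtain ⟨T0, hT0, hnull⟩ := exists_countable_measure_diff_biUnion_eq_zero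
    (n.withDensity fun s => ENNReal.ofReal (f s)) (N := fun t => {s | V s t ≠ 0})
    fun t => (measurableSet_singleton 0).compl.preimage (hVm t)
  have hnull' : ∀ t, n ({s | V s t ≠ 0} \ V ⁻¹' supportMeets T0) = 0 := fun t =>
    hn_ac (by rw [supportMeets_eq_biUnion, preimage_iUnion₂]; exact hnull t)
  refine ⟨T0, hT0, ?_⟩
  change (n.restrict (V ⁻¹' supportMeets T0)).map V = ν
  rw [← Measure.restrict_map hV (measurableSet_supportMeets hT0),
    hrep.map_restrict_supportMeets hV hL1 hT0]
  exact Measure.restrict_eq_self_of_ae_mem <| mem_ae_iff.2 <|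
    hrep.measure_compl_supportMeets_eq_zero hV hL1 hL2 hT0 hnull'
end

section
/- Let T be an uncountable set and let ν be the counting measure on the set E = {e_s : s ∈ T} ⊂ R^T of coordinate unit functions (e_s(t) = 1 if t = s, else 0). Then ν is a Lévy measure on (R^T, B^T) — it satisfies ∫ (|x(t)|^2 ∧ 1) ν(dx) = 1 < ∞ for each t and ν(A) = ν_*(A \ {0_T}) for every A ∈ B^T — but ν is not σ-finite. -/
open scoped Classical

open MeasureTheory Set
open scoped ENNReal

/-!
Evaluating `ν = ∑ₛ δ_{e_s}` on a measurable set `A` counts the `s` with `e_s ∈ A`. The point `0`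
is not separated from the `e_s` by a measurable set, but each single `e_s` is, by the measurable
set `{x | x s ≠ 0}`; finitely many of these suffice to exhaust `ν A` from inside `A \ {0}`.
Finally, a set of finite `ν`-measure contains only finitely many `e_s`, so countably many of them
cannot cover the uncountably many unit functions.
-/

namespace MeasureTheory

variable {α ι : Type*} [MeasurableSpace α]

lemma measure_le_innerMeasure (ν : Measure α) {D E : Set α} (hD : MeasurableSet D)
    (hDE : D ⊆ E) : ν D ≤ innerMeasure ν E :=
  le_iSup_of_le D <| le_iSup_of_le hD <| le_iSup_of_le hDE le_rfl

lemma innerMeasure_le_measure (ν : Measure α) {E A : Set α} (hEA : E ⊆ A) :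
    innerMeasure ν E ≤ ν A :=
  iSup_le fun _ => iSup_le fun _ => iSup_le fun hDE => measure_mono (hDE.trans hEA)

theorem Measure.sum_apply_eq_innerMeasure_diff (μ : ι → Measure α) {U : ι → Set α}
    {A B : Set α} (hU : ∀ i, MeasurableSet (U i)) (hμU : ∀ i, μ i (U i)ᶜ = 0)
    (hUB : ∀ i, Disjoint (U i) B) (hA : MeasurableSet A) :
    Measure.sum μ A = innerMeasure (Measure.sum μ) (A \ B) := by
  refine le_antisymm ?_ (innerMeasure_le_measure _ sdiff_subset)
  rw [Measure.sum_apply _ hA, ENNReal.tsum_eq_iSup_sum]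
  refine iSup_le fun F => ?_
  set D := A ∩ ⋃ i ∈ F, U i
  have hD : MeasurableSet D := hA.inter (F.measurableSet_biUnion fun i _ => hU i)
  have hDB : D ⊆ A \ B := by
    rintro x ⟨hxA, hxU⟩
    obtain ⟨i, -, hxi⟩ := mem_iUnion₂.mp hxU
    exact ⟨hxA, (hUB i).notMem_of_mem_left hxi⟩
  have hμD : ∀ i ∈ F, μ i A = μ i D := fun i hi => le_antisymm
    (calc μ i A = μ i (A ∩ U i) := (measure_inter_conull (hμU i)).symm
      _ ≤ μ i D := measure_mono (inter_subset_inter_right _ (subset_biUnion_of_mem hi)))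
    (measure_mono inter_subset_left)
  calc ∑ i ∈ F, μ i A = ∑ i ∈ F, μ i D := Finset.sum_congr rfl hμD
    _ ≤ Measure.sum μ D := (ENNReal.sum_le_tsum F).trans_eq (Measure.sum_apply _ hD).symm
    _ ≤ _ := measure_le_innerMeasure _ hD hDB

lemma Measure.sum_dirac_apply (f : ι → α) {A : Set α} (hA : MeasurableSet A) :
    Measure.sum (fun i => dirac (f i)) A = (f ⁻¹' A).encard := by
  rw [Measure.sum_apply _ hA]
  simp_rw [dirac_apply' _ hA]
  change ∑' i, (f ⁻¹' A).indicator 1 i = _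
  rw [← tsum_subtype]
  exact ENNReal.tsum_set_one _

theorem Measure.not_sigmaFinite_sum_dirac [Uncountable ι] (f : ι → α) :
    ¬ SigmaFinite (Measure.sum fun i => dirac (f i)) := by
  intro _
  set ν := Measure.sum fun i => dirac (f i)
  have hfinite : ∀ n, (f ⁻¹' spanningSets ν n).Finite := fun n => by
    have := measure_spanningSets_lt_top ν n
    rwa [sum_dirac_apply f (measurableSet_spanningSets ν n), ENat.toENNReal_lt_top,
      encard_lt_top_iff] at this
  have hcover : ⋃ n, f ⁻¹' spanningSets ν n = univ := by
    rw [← preimage_iUnion, iUnion_spanningSets, preimage_univ]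
  exact not_countable_univ (hcover ▸ countable_iUnion fun n => (hfinite n).countable)

end MeasureTheory

/-- For `T` uncountable, the counting measure `ν` of the set of coordinate unit functions
`{e_s : s ∈ T}` in `ℝ^T` is a Lévy measure—satisfying (L1) with
`∫ (|x(t)|² ∧ 1) ν(dx) = 1` for each `t`, and (L2)—but it is not σ-finite. -/
theorem counting_measure_unit_functions_levy_not_sigmaFinite {T : Type*} [Uncountable T]
    (ν : Measure (T → ℝ))
    (hν : ν = Measure.sum fun s : T =>
      Measure.dirac (fun t : T => if t = s then (1 : ℝ) else 0)) :
    (∀ t : T, ∫⁻ x : T → ℝ, ENNReal.ofReal (min ((x t) ^ 2) 1) ∂ν = 1) ∧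
    (∀ A : Set (T → ℝ), MeasurableSet A → ν A = innerMeasure ν (A \ {0})) ∧
    ¬ SigmaFinite ν := by
  subst hν
  refine ⟨fun t => ?_, fun A hA => ?_, Measure.not_sigmaFinite_sum_dirac _⟩
  · have hmeas : Measurable fun x : T → ℝ => ENNReal.ofReal (min ((x t) ^ 2) 1) := by fun_prop
    rw [lintegral_sum_measure]
    simp_rw [lintegral_dirac' _ hmeas]
    have hunit : ∀ s : T, ENNReal.ofReal (min ((if t = s then (1 : ℝ) else 0) ^ 2) 1) =
        if s = t then 1 else 0 := fun s => by
      rcases eq_or_ne s t with rfl | hst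
      · simp
      · simp [hst, hst.symm]
    simp_rw [hunit, tsum_ite_eq]
  · have hU : ∀ s : T, MeasurableSet {x : T → ℝ | x s ≠ 0} := fun s =>
      (measurableSet_singleton 0).compl.preimage (measurable_pi_apply s)
    refine Measure.sum_apply_eq_innerMeasure_diff _ hU (fun s => ?_) (fun s => ?_) hA
    · rw [Measure.dirac_apply' _ (hU s).compl]
      simp
    · exact disjoint_singleton_right.mpr (by simp)
end
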